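/- arXiv:1509.01708 — 4 statements merged into one kernel-verified Lean document; each statement's English description precedes it below -/
import Mathlib

section
/- Let α_j ≥ 0 (j = 1, 2, …) satisfy Σ_{j≥1} α_j < 1 and α_j ≤ c j^{−γ} for some c > 0 and γ > 1. For k ≥ 1 define A_k := α_k + Σ_{0<p<k} Σ_{0<i₁<…<i_p<k} α_{i₁} α_{i₂−i₁} ⋯ α_{i_p−i_{p−1}} α_{k−i_p}. Then there exists C > 0 such that A_k ≤ C k^{−γ} for all k ≥ 1. -/
noncomputable section

/-- For a finite set `S = {i₁ < i₂ < … < i_p} ⊆ (0, k)` the product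
`α_{i₁} α_{i₂-i₁} ⋯ α_{i_p-i_{p-1}} α_{k-i_p}` (for `S = ∅` this is just `α_k`). -/
def chainProd (α : ℕ → ℝ) (k : ℕ) (S : Finset ℕ) : ℝ :=
  (List.zipWith (fun x y => α (y - x))
    (0 :: S.sort (· ≤ ·)) (S.sort (· ≤ ·) ++ [k])).prod

/-- `A_k := α_k + ∑_{0<p<k} ∑_{0<i₁<…<i_p<k} α_{i₁} α_{i₂-i₁} ⋯ α_{i_p-i_{p-1}} α_{k-i_p}`,
i.e. the sum over all subsets `S` of `(0, k)` of the corresponding chain products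
(the empty set contributing the term `α_k`). -/
def Aseq (α : ℕ → ℝ) (k : ℕ) : ℝ :=
  ∑ S ∈ (Finset.Ioo 0 k).powerset, chainProd α k S


lemma sort_image_add (T : Finset ℕ) (j : ℕ) :
    (T.image (fun t => t + j)).sort (· ≤ ·) = (T.sort (· ≤ ·)).map (fun t => t + j) := by
  have hnd : ((T.sort (· ≤ ·)).map (fun t => t + j)).Nodup :=
    (Finset.sort_nodup _ _).map (fun a b h => by omega)
  have hs : ((T.sort (· ≤ ·)).map (fun t => t + j)).Pairwise (· ≤ ·) :=
    List.Pairwise.map _ (fun a b hab => by omega) (Finset.pairwise_sort _ _)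
  have hfin : ((T.sort (· ≤ ·)).map (fun t => t + j)).toFinset = T.image (fun t => t + j) := by
    ext x
    simp only [List.mem_toFinset, List.mem_map, Finset.mem_image, Finset.mem_sort]
  rw [← hfin]
  exact (List.toFinset_sort _ hnd).2 hs

lemma sort_insert_image (j : ℕ) (T : Finset ℕ) (hT : 0 ∉ T) :
    (insert j (T.image (fun t => t + j))).sort (· ≤ ·)
      = j :: (T.sort (· ≤ ·)).map (fun t => t + j) := by
  rw [Finset.sort_insert]
  · rw [sort_image_add]
  · intro b hb
    simp only [Finset.mem_image] at hb
    obtain ⟨t, _, rfl⟩ := hb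
    omega
  · intro h
    simp only [Finset.mem_image] at h
    obtain ⟨t, ht, hte⟩ := h
    have : t = 0 := by omega
    exact hT (this ▸ ht)

lemma chainProd_empty (α : ℕ → ℝ) (k : ℕ) : chainProd α k ∅ = α k := by
  simp [chainProd]

lemma chainProd_insert (α : ℕ → ℝ) (k j : ℕ) (hjk : j ≤ k) (T : Finset ℕ) (hT : 0 ∉ T) :
    chainProd α k (insert j (T.image (fun t => t + j))) = α j * chainProd α (k - j) T := by
  unfold chainProd
  rw [sort_insert_image j T hT]
  set L := T.sort (· ≤ ·) with hL
  have hmap1 : (j :: L.map (fun t => t + j)) = (0 :: L).map (fun t => t + j) := by simp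
  have hmap2 : (L.map (fun t => t + j)) ++ [k] = (L ++ [k - j]).map (fun t => t + j) := by
    simp [Nat.sub_add_cancel hjk]
  rw [List.cons_append, List.zipWith_cons_cons, List.prod_cons, Nat.sub_zero]
  congr 1
  rw [hmap1, hmap2, List.zipWith_map]
  simp only [Nat.add_sub_add_right]

lemma Aseq_rec (α : ℕ → ℝ) (k : ℕ) :
    Aseq α k = α k + ∑ j ∈ Finset.Ioo 0 k, α j * Aseq α (k - j) := by
  classical
  have h0 : (∅ : Finset ℕ) ∈ (Finset.Ioo 0 k).powerset := by simp
  rw [Aseq, ← Finset.add_sum_erase _ _ h0, chainProd_empty]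
  congr 1
  have hexp : ∀ j ∈ Finset.Ioo 0 k,
      α j * Aseq α (k - j) = ∑ T ∈ (Finset.Ioo 0 (k - j)).powerset, α j * chainProd α (k - j) T := by
    intro j _
    rw [Aseq, Finset.mul_sum]
  rw [Finset.sum_congr rfl hexp, Finset.sum_sigma']
  refine (Finset.sum_nbij'
    (i := fun p => insert p.1 (p.2.image (fun t => t + p.1)))
    (j := fun S => ⟨WithTop.untopD 0 S.min, ((S.erase (WithTop.untopD 0 S.min)).image (fun t => t - WithTop.untopD 0 S.min))⟩)
    ?_ ?_ ?_ ?_ ?_).symm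
  · -- maps sigma into erase ∅
    rintro ⟨j, T⟩ hp
    simp only [Finset.mem_sigma, Finset.mem_Ioo, Finset.mem_powerset] at hp
    obtain ⟨⟨hj0, hjk⟩, hT⟩ := hp
    simp only [Finset.mem_erase, Finset.mem_powerset]
    constructor
    · exact Finset.insert_ne_empty _ _
    · intro x hx
      simp only [Finset.mem_insert, Finset.mem_image] at hx
      simp only [Finset.mem_Ioo]
      rcases hx with rfl | ⟨t, ht, rfl⟩
      · exact ⟨hj0, hjk⟩
      · have := hT ht
        simp only [Finset.mem_Ioo] at this
        omega
  · -- inverse maps into sigma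
    intro S hS
    simp only [Finset.mem_erase, Finset.mem_powerset] at hS
    obtain ⟨hSne, hSsub⟩ := hS
    have hne : S.Nonempty := Finset.nonempty_iff_ne_empty.2 hSne
    have hmin : WithTop.untopD 0 S.min = S.min' hne := by
      rw [← Finset.coe_min' hne]; rfl
    have hminS : S.min' hne ∈ S := Finset.min'_mem _ _
    have hminIoo := hSsub hminS
    simp only [Finset.mem_Ioo] at hminIoo
    simp only [Finset.mem_sigma, Finset.mem_Ioo, Finset.mem_powerset, hmin]
    refine ⟨⟨hminIoo.1, hminIoo.2⟩, ?_⟩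
    intro x hx
    simp only [Finset.mem_image, Finset.mem_erase] at hx
    obtain ⟨s, ⟨hsne, hsS⟩, rfl⟩ := hx
    have h1 : S.min' hne ≤ s := Finset.min'_le _ _ hsS
    have h2 := hSsub hsS
    simp only [Finset.mem_Ioo] at h2
    simp only [Finset.mem_Ioo]
    omega
  · -- left inverse
    rintro ⟨j, T⟩ hp
    simp only [Finset.mem_sigma, Finset.mem_Ioo, Finset.mem_powerset] at hp
    obtain ⟨⟨hj0, hjk⟩, hT⟩ := hp
    have hTpos : ∀ t ∈ T, 0 < t ∧ t < k - j := by
      intro t ht; have := hT ht; simpa only [Finset.mem_Ioo] using this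
    set S := insert j (T.image (fun t => t + j)) with hSdef
    have hne : S.Nonempty := ⟨j, Finset.mem_insert_self _ _⟩
    have hminval : S.min' hne = j := by
      apply le_antisymm
      · exact Finset.min'_le _ _ (Finset.mem_insert_self _ _)
      · apply Finset.le_min'
        intro y hy
        simp only [hSdef, Finset.mem_insert, Finset.mem_image] at hy
        rcases hy with rfl | ⟨t, _, rfl⟩ <;> omega
    have hmin : WithTop.untopD 0 S.min = j := by
      rw [← Finset.coe_min' hne, hminval]
      rfl
    have hjnot : j ∉ T.image (fun t => t + j) := by
      simp only [Finset.mem_image]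
      rintro ⟨t, ht, hte⟩
      have := (hTpos t ht).1
      omega
    have herase : S.erase j = T.image (fun t => t + j) := by
      rw [hSdef, Finset.erase_insert hjnot]
    have himg : (T.image (fun t => t + j)).image (fun t => t - j) = T := by
      rw [Finset.image_image]
      have : ((fun t => t - j) ∘ (fun t => t + j)) = id := by
        funext t; simp
      rw [this, Finset.image_id]
    simp only [hmin, herase, himg]
  · -- right inverse
    intro S hS
    simp only [Finset.mem_erase, Finset.mem_powerset] at hS
    obtain ⟨hSne, hSsub⟩ := hS
    have hne : S.Nonempty := Finset.nonempty_iff_ne_empty.2 hSne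
    have hmin : WithTop.untopD 0 S.min = S.min' hne := by
      rw [← Finset.coe_min' hne]; rfl
    simp only [hmin]
    rw [Finset.image_image]
    have himg : (S.erase (S.min' hne)).image ((fun t => t + S.min' hne) ∘ (fun t => t - S.min' hne))
        = S.erase (S.min' hne) := by
      apply Finset.image_congr ?_ |>.trans (Finset.image_id)
      intro s hs
      simp only [Finset.mem_coe, Finset.mem_erase] at hs
      have : S.min' hne ≤ s := Finset.min'_le _ _ hs.2
      simp only [Function.comp_apply, id_eq]
      omega
    rw [himg, Finset.insert_erase (Finset.min'_mem _ _)]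
  · -- values
    rintro ⟨j, T⟩ hp
    simp only [Finset.mem_sigma, Finset.mem_Ioo, Finset.mem_powerset] at hp
    obtain ⟨⟨hj0, hjk⟩, hT⟩ := hp
    have hT0 : 0 ∉ T := by
      intro h; have := hT h; simp only [Finset.mem_Ioo] at this; omega
    exact (chainProd_insert α k j (le_of_lt hjk) T hT0).symm

lemma Aseq_nonneg (α : ℕ → ℝ) (hnonneg : ∀ j : ℕ, 1 ≤ j → 0 ≤ α j) :
    ∀ k : ℕ, 1 ≤ k → 0 ≤ Aseq α k := by
  intro k
  induction k using Nat.strong_induction_on with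
  | _ k ih =>
    intro hk
    rw [Aseq_rec]
    refine add_nonneg (hnonneg k hk) (Finset.sum_nonneg ?_)
    intro j hj
    simp only [Finset.mem_Ioo] at hj
    exact mul_nonneg (hnonneg j hj.1) (ih (k - j) (by omega) (by omega))

lemma sum_alpha_tail (α : ℕ → ℝ) (hnonneg : ∀ j : ℕ, 1 ≤ j → 0 ≤ α j)
    (hsummable : Summable (fun j : ℕ => α (j + 1))) (m : ℕ) :
    ∀ F : Finset ℕ, (∀ j ∈ F, m + 1 ≤ j) → ∑ j ∈ F, α j ≤ ∑' i : ℕ, α (i + m + 1) := by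
  intro F hF
  have hsm : Summable (fun i : ℕ => α (i + m + 1)) := by
    have := (summable_nat_add_iff (f := fun j : ℕ => α (j + 1)) m).2 hsummable
    simpa using this
  have h1 : ∑ j ∈ F, α j = ∑ i ∈ F.image (fun j => j - (m + 1)), α (i + m + 1) := by
    refine Finset.sum_nbij' (i := fun j => j - (m + 1)) (j := fun i => i + (m + 1)) ?_ ?_ ?_ ?_ ?_
    · intro a ha
      exact Finset.mem_image_of_mem _ ha
    · intro a ha
      simp only [Finset.mem_image] at ha
      obtain ⟨b, hb, rfl⟩ := ha
      have := hF b hb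
      have hbe : b - (m + 1) + (m + 1) = b := by omega
      rwa [hbe]
    · intro a ha
      have := hF a ha
      omega
    · intro a ha
      omega
    · intro a ha
      have := hF a ha
      congr 1
      omega
  rw [h1]
  refine hsm.sum_le_tsum _ (fun i _ => hnonneg _ (by omega))

lemma Aseq_partial_le (α : ℕ → ℝ) (hnonneg : ∀ j : ℕ, 1 ≤ j → 0 ≤ α j)
    (hsummable : Summable (fun j : ℕ => α (j + 1)))
    (hsum : ∑' j : ℕ, α (j + 1) < 1) (N : ℕ) :
    ∑ i ∈ Finset.Icc 1 N, Aseq α i ≤ (∑' j : ℕ, α (j + 1)) / (1 - ∑' j : ℕ, α (j + 1)) := by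
  set S := ∑' j : ℕ, α (j + 1) with hSdef
  have hS0 : 0 ≤ S := tsum_nonneg (fun j => hnonneg _ (by omega))
  have h1S : 0 < 1 - S := by linarith
  have hpart : ∀ F : Finset ℕ, (∀ j ∈ F, 1 ≤ j) → ∑ j ∈ F, α j ≤ S := by
    intro F hF
    have := sum_alpha_tail α hnonneg hsummable 0 F (by simpa using hF)
    simpa using this
  set Q := ∑ i ∈ Finset.Icc 1 N, Aseq α i with hQdef
  have hQ0 : 0 ≤ Q :=
    Finset.sum_nonneg fun i hi => Aseq_nonneg α hnonneg i (by simp [Finset.mem_Icc] at hi; omega)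
  have hrec : Q = (∑ i ∈ Finset.Icc 1 N, α i)
      + ∑ i ∈ Finset.Icc 1 N, ∑ j ∈ Finset.Ioo 0 i, α j * Aseq α (i - j) := by
    rw [hQdef, ← Finset.sum_add_distrib]
    exact Finset.sum_congr rfl fun i _ => Aseq_rec α i
  have hswap : ∑ i ∈ Finset.Icc 1 N, ∑ j ∈ Finset.Ioo 0 i, α j * Aseq α (i - j)
      = ∑ j ∈ Finset.Icc 1 N, ∑ m' ∈ Finset.Icc 1 (N - j), α j * Aseq α m' := by
    rw [Finset.sum_sigma', Finset.sum_sigma']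
    refine Finset.sum_nbij' (i := fun p => ⟨p.2, p.1 - p.2⟩) (j := fun p => ⟨p.1 + p.2, p.1⟩)
      ?_ ?_ ?_ ?_ ?_
    · rintro ⟨a, b⟩ hp
      simp only [Finset.mem_sigma, Finset.mem_Icc, Finset.mem_Ioo] at hp ⊢
      omega
    · rintro ⟨a, b⟩ hp
      simp only [Finset.mem_sigma, Finset.mem_Icc, Finset.mem_Ioo] at hp ⊢
      omega
    · rintro ⟨a, b⟩ hp
      simp only [Finset.mem_sigma, Finset.mem_Icc, Finset.mem_Ioo] at hp
      dsimp only
      have h1 : b + (a - b) = a := by omega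
      simp only [h1]
    · rintro ⟨a, b⟩ hp
      simp only [Finset.mem_sigma, Finset.mem_Icc, Finset.mem_Ioo] at hp
      dsimp only
      have h1 : a + b - a = b := by omega
      simp only [h1]
    · rintro ⟨a, b⟩ hp
      rfl
  have hD : ∑ j ∈ Finset.Icc 1 N, ∑ m' ∈ Finset.Icc 1 (N - j), α j * Aseq α m' ≤ S * Q := by
    have hstep : ∀ j ∈ Finset.Icc 1 N, ∑ m' ∈ Finset.Icc 1 (N - j), α j * Aseq α m' ≤ α j * Q := by
      intro j hj
      simp only [Finset.mem_Icc] at hj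
      rw [← Finset.mul_sum]
      refine mul_le_mul_of_nonneg_left ?_ (hnonneg j hj.1)
      refine Finset.sum_le_sum_of_subset_of_nonneg ?_ ?_
      · intro x hx
        simp only [Finset.mem_Icc] at hx ⊢
        omega
      · intro i hi _
        simp only [Finset.mem_Icc] at hi
        exact Aseq_nonneg α hnonneg i hi.1
    calc ∑ j ∈ Finset.Icc 1 N, ∑ m' ∈ Finset.Icc 1 (N - j), α j * Aseq α m'
        ≤ ∑ j ∈ Finset.Icc 1 N, α j * Q := Finset.sum_le_sum hstep
      _ = (∑ j ∈ Finset.Icc 1 N, α j) * Q := by rw [Finset.sum_mul]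
      _ ≤ S * Q := by
          refine mul_le_mul_of_nonneg_right ?_ hQ0
          exact hpart _ (fun j hj => by simp [Finset.mem_Icc] at hj; omega)
  have hQle : Q ≤ S + S * Q := by
    have h1 : (∑ i ∈ Finset.Icc 1 N, α i) ≤ S :=
      hpart _ (fun j hj => by simp [Finset.mem_Icc] at hj; omega)
    calc Q = _ := hrec
      _ ≤ S + S * Q := by rw [hswap] at *; linarith [hD]
  rw [le_div_iff₀ h1S]
  nlinarith
set_option maxHeartbeats 1600000 in
/-- Lemma 1: if `α_j ≥ 0`, `∑_{j≥1} α_j < 1` and `α_j ≤ c j^{-γ}` for some `c > 0`, `γ > 1`,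
then there exists `C > 0` with `A_k ≤ C k^{-γ}` for all `k ≥ 1`. -/
theorem statement_7 (α : ℕ → ℝ) (c γ : ℝ)
    (hc : 0 < c) (hγ : 1 < γ)
    (hnonneg : ∀ j : ℕ, 1 ≤ j → 0 ≤ α j)
    (hsummable : Summable (fun j : ℕ => α (j + 1)))
    (hsum : ∑' j : ℕ, α (j + 1) < 1)
    (hbound : ∀ j : ℕ, 1 ≤ j → α j ≤ c * (j : ℝ) ^ (-γ)) :
    ∃ C : ℝ, 0 < C ∧ ∀ k : ℕ, 1 ≤ k → Aseq α k ≤ C * (k : ℝ) ^ (-γ) := by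
  classical
  obtain ⟨S, hSdef⟩ : ∃ y : ℝ, y = ∑' j : ℕ, α (j + 1) := ⟨_, rfl⟩
  have hS1 : S < 1 := by rw [hSdef]; exact hsum
  have hS0 : 0 ≤ S := by rw [hSdef]; exact tsum_nonneg (fun j => hnonneg _ (by omega))
  have h1S : 0 < 1 - S := by linarith
  obtain ⟨T, hTdef⟩ : ∃ y : ℝ, y = S / (1 - S) := ⟨_, rfl⟩
  have hT0 : 0 ≤ T := by rw [hTdef]; exact div_nonneg hS0 h1S.le
  have hA0 : ∀ k : ℕ, 1 ≤ k → 0 ≤ Aseq α k := Aseq_nonneg α hnonneg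
  have hQ : ∀ N : ℕ, ∑ i ∈ Finset.Icc 1 N, Aseq α i ≤ T := by
    intro N
    rw [hTdef, hSdef]
    exact Aseq_partial_le α hnonneg hsummable hsum N
  have hγ0 : 0 < γ := by linarith
  have h2γ : (0:ℝ) < (2:ℝ) ^ γ := Real.rpow_pos_of_pos (by norm_num) _
  obtain ⟨δ, hδdef⟩ : ∃ y : ℝ, y = (1 - S) / 4 := ⟨_, rfl⟩
  have hδ0 : 0 < δ := by rw [hδdef]; positivity
  obtain ⟨ε, hεdef⟩ : ∃ y : ℝ, y = (1 - S) / 4 * ((2:ℝ) ^ γ)⁻¹ := ⟨_, rfl⟩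
  have hε0 : 0 < ε := by rw [hεdef]; positivity
  have hε2 : ε * (2:ℝ) ^ γ = (1 - S) / 4 := by
    rw [hεdef]; field_simp
  obtain ⟨m, hm⟩ : ∃ m : ℕ, ∑' i : ℕ, α (i + m + 1) ≤ ε := by
    have ht := tendsto_sum_nat_add (f := fun j : ℕ => α (j + 1))
    have hev := Filter.Tendsto.eventually_lt_const hε0 ht
    obtain ⟨m, hm⟩ := hev.exists
    exact ⟨m, le_of_lt hm⟩
  have htail : ∀ F : Finset ℕ, (∀ j ∈ F, m + 1 ≤ j) → ∑ j ∈ F, α j ≤ ε :=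
    fun F hF => le_trans (sum_alpha_tail α hnonneg hsummable m F hF) hm
  have hpart : ∀ F : Finset ℕ, (∀ j ∈ F, 1 ≤ j) → ∑ j ∈ F, α j ≤ S := by
    intro F hF
    rw [hSdef]
    have := sum_alpha_tail α hnonneg hsummable 0 F (by simpa using hF)
    simpa using this
  obtain ⟨β, hβdef⟩ : ∃ y : ℝ, y = (1 + δ) ^ (-(1/γ)) := ⟨_, rfl⟩
  have hβ0 : 0 < β := by rw [hβdef]; exact Real.rpow_pos_of_pos (by linarith) _
  have hβ1 : β < 1 := by
    rw [hβdef]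
    apply Real.rpow_lt_one_of_one_lt_of_neg (by linarith)
    have : 0 < 1/γ := by positivity
    linarith
  have hβe : β ^ (-γ) = 1 + δ := by
    rw [hβdef, ← Real.rpow_mul (by linarith : (0:ℝ) ≤ 1 + δ)]
    have : -(1/γ) * -γ = 1 := by field_simp
    rw [this, Real.rpow_one]
  obtain ⟨K, hKdef⟩ : ∃ y : ℕ, y = max (2*m + 2) (⌈(m:ℝ)/(1-β)⌉₊ + 1) := ⟨_, rfl⟩
  have hkey : ∀ k : ℕ, K ≤ k → ((k - m : ℕ):ℝ) ^ (-γ) ≤ (1+δ) * (k:ℝ)^(-γ) := by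
    intro k hKk
    rw [hKdef] at hKk
    have hk2m : 2*m + 2 ≤ k := le_trans (le_max_left _ _) hKk
    have hceil : ⌈(m:ℝ)/(1-β)⌉₊ + 1 ≤ k := le_trans (le_max_right _ _) hKk
    have hk0 : (0:ℝ) < (k:ℝ) := by exact_mod_cast Nat.pos_of_ne_zero (by omega)
    have h1β : (0:ℝ) < 1 - β := by linarith
    have hηk : (m:ℝ) ≤ (1-β) * k := by
      have h1 : ((m:ℝ)/(1-β)) ≤ (⌈(m:ℝ)/(1-β)⌉₊ : ℝ) := Nat.le_ceil _
      have h2 : ((⌈(m:ℝ)/(1-β)⌉₊ : ℝ)) ≤ (k:ℝ) := by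
        exact_mod_cast le_trans (Nat.le_succ _) hceil
      have h3 := (div_le_iff₀ h1β).1 (le_trans h1 h2)
      linarith
    have hcast : ((k - m : ℕ):ℝ) = (k:ℝ) - (m:ℝ) := by
      have hmk : m ≤ k := by omega
      exact Nat.cast_sub hmk
    have hβk : β * k ≤ (k:ℝ) - m := by nlinarith
    have hβkpos : (0:ℝ) < β * k := by positivity
    calc ((k-m:ℕ):ℝ)^(-γ) = ((k:ℝ)-(m:ℝ))^(-γ) := by rw [hcast]
      _ ≤ (β*(k:ℝ))^(-γ) := Real.rpow_le_rpow_of_nonpos hβkpos hβk (by linarith)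
      _ = β^(-γ) * (k:ℝ)^(-γ) := Real.mul_rpow hβ0.le hk0.le
      _ = (1+δ) * (k:ℝ)^(-γ) := by rw [hβe]
  obtain ⟨C1, hC1def⟩ : ∃ y : ℝ, y = ∑ i ∈ Finset.range K, Aseq α i * (i:ℝ)^γ := ⟨_, rfl⟩
  have hterm : ∀ i ∈ Finset.range K, 0 ≤ Aseq α i * (i:ℝ)^γ := by
    intro i _
    rcases Nat.eq_zero_or_pos i with rfl | hi
    · simp [Real.zero_rpow (ne_of_gt hγ0)]
    · exact mul_nonneg (hA0 i hi) (Real.rpow_nonneg (Nat.cast_nonneg _) _)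
  have hC1nn : 0 ≤ C1 := by rw [hC1def]; exact Finset.sum_nonneg hterm
  obtain ⟨C0, hC0def⟩ : ∃ y : ℝ, y = (c + c * (2:ℝ)^γ * T) * 2 / (1 - S) := ⟨_, rfl⟩
  have hC0pos : 0 < C0 := by
    rw [hC0def]
    apply div_pos _ h1S
    nlinarith [mul_nonneg (mul_nonneg hc.le h2γ.le) hT0]
  obtain ⟨C, hCdef⟩ : ∃ y : ℝ, y = C0 + C1 := ⟨_, rfl⟩
  have hCnn : 0 ≤ C := by rw [hCdef]; linarith
  refine ⟨C, by rw [hCdef]; linarith, ?_⟩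
  have hkeyC : c + S*C*(1+δ) + (1-S)/4*C + c*(2:ℝ)^γ*T ≤ C := by
    have e1 : S*C*(1+(1-S)/4) ≤ C*S + C*((1-S)/4) := by
      nlinarith [mul_nonneg (mul_nonneg h1S.le hCnn) (by linarith : (0:ℝ) ≤ (1-S)/4)]
    have e3 : c + c*(2:ℝ)^γ*T ≤ C * ((1-S)/2) := by
      have he : c + c*(2:ℝ)^γ*T = C0 * ((1-S)/2) := by
        rw [hC0def]; field_simp
      rw [he, hCdef]
      have h4 : 0 ≤ C1 * ((1-S)/2) := mul_nonneg hC1nn (by linarith)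
      linarith [h4]
    rw [hδdef]
    linarith [e1, e3]
  intro k
  induction k using Nat.strong_induction_on with
  | _ k ih =>
  intro hk
  have hk0 : (0:ℝ) < (k:ℝ) := by exact_mod_cast Nat.pos_of_ne_zero (by omega)
  obtain ⟨x, hxdef⟩ : ∃ y : ℝ, y = (k:ℝ)^(-γ) := ⟨_, rfl⟩
  rw [← hxdef]
  have hx0 : 0 < x := by rw [hxdef]; exact Real.rpow_pos_of_pos hk0 _
  by_cases hkK : k < K
  · have hmem : k ∈ Finset.range K := Finset.mem_range.mpr hkK
    have h1 : Aseq α k * (k:ℝ)^γ ≤ C1 := by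
      rw [hC1def]; exact Finset.single_le_sum hterm hmem
    have h2 : (k:ℝ)^γ * x = 1 := by
      rw [hxdef, ← Real.rpow_add hk0]; simp
    have h3 : Aseq α k = (Aseq α k * (k:ℝ)^γ) * x := by
      rw [mul_assoc, h2, mul_one]
    rw [h3]
    calc (Aseq α k * (k:ℝ)^γ) * x ≤ C1 * x := mul_le_mul_of_nonneg_right h1 hx0.le
      _ ≤ C * x := mul_le_mul_of_nonneg_right (by linarith) hx0.le
  · push_neg at hkK
    rw [hKdef] at hkK
    have hk2m : 2*m + 2 ≤ k := le_trans (le_max_left _ _) hkK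
    rw [← hKdef] at hkK
    rw [Aseq_rec]
    set R := Finset.Ioo 0 k with hRdef
    set f := fun j => α j * Aseq α (k - j) with hfdef
    set R1 := R.filter (fun j => j ≤ m) with hR1def
    set R2 := (R.filter (fun j => ¬ j ≤ m)).filter (fun j => 2*j ≤ k) with hR2def
    set R3 := (R.filter (fun j => ¬ j ≤ m)).filter (fun j => ¬ 2*j ≤ k) with hR3def
    have hsplit : ∑ j ∈ R, f j = ∑ j ∈ R1, f j + (∑ j ∈ R2, f j + ∑ j ∈ R3, f j) := by
      rw [hR1def, hR2def, hR3def,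
        Finset.sum_filter_add_sum_filter_not (R.filter (fun j => ¬ j ≤ m)) (fun j => 2*j ≤ k) f,
        Finset.sum_filter_add_sum_filter_not R (fun j => j ≤ m) f]
    have h2e : ((k:ℝ)/2)^(-γ) = 2^γ * x := by
      rw [hxdef, Real.div_rpow hk0.le (by norm_num : (0:ℝ) ≤ 2),
        Real.rpow_neg (by norm_num : (0:ℝ) ≤ 2), div_eq_mul_inv, inv_inv, mul_comm]
    have hB1 : ∑ j ∈ R1, f j ≤ S * (C * ((1+δ) * x)) := by
      have hper : ∀ j ∈ R1, f j ≤ α j * (C * ((1+δ) * x)) := by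
        intro j hj
        simp only [hR1def, Finset.mem_filter, hRdef, Finset.mem_Ioo] at hj
        obtain ⟨⟨hj0, hjk⟩, hjm⟩ := hj
        have hIH : Aseq α (k - j) ≤ C * ((k - j : ℕ):ℝ)^(-γ) := ih (k - j) (by omega) (by omega)
        have hmono : ((k - j : ℕ):ℝ)^(-γ) ≤ ((k - m : ℕ):ℝ)^(-γ) := by
          apply Real.rpow_le_rpow_of_nonpos
          · have h5 : (0:ℕ) < k - m := by omega
            exact_mod_cast h5
          · exact_mod_cast Nat.sub_le_sub_left hjm k
          · linarith
        have hA : Aseq α (k - j) ≤ C * ((1+δ) * x) := by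
          refine le_trans hIH (mul_le_mul_of_nonneg_left ?_ hCnn)
          rw [hxdef]
          exact le_trans hmono (hkey k hkK)
        exact mul_le_mul_of_nonneg_left hA (hnonneg j hj0)
      calc ∑ j ∈ R1, f j ≤ ∑ j ∈ R1, α j * (C * ((1+δ)*x)) := Finset.sum_le_sum hper
        _ = (∑ j ∈ R1, α j) * (C * ((1+δ)*x)) := by rw [← Finset.sum_mul]
        _ ≤ S * (C * ((1+δ)*x)) := by
            apply mul_le_mul_of_nonneg_right
            · apply hpart
              intro j hj
              simp only [hR1def, Finset.mem_filter, hRdef, Finset.mem_Ioo] at hj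
              omega
            · exact mul_nonneg hCnn (mul_nonneg (by linarith) hx0.le)
    have hB2 : ∑ j ∈ R2, f j ≤ ε * (C * (2^γ * x)) := by
      have hper : ∀ j ∈ R2, f j ≤ α j * (C * (2^γ * x)) := by
        intro j hj
        simp only [hR2def, Finset.mem_filter, hRdef, Finset.mem_Ioo] at hj
        obtain ⟨⟨⟨hj0, hjk⟩, hjm⟩, hj2⟩ := hj
        have hIH : Aseq α (k - j) ≤ C * ((k - j : ℕ):ℝ)^(-γ) := ih (k - j) (by omega) (by omega)
        have hc2 : (k:ℝ)/2 ≤ ((k-j:ℕ):ℝ) := by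
          have hcst : ((k-j:ℕ):ℝ) = (k:ℝ) - (j:ℝ) := by
            exact_mod_cast Nat.cast_sub (by omega : j ≤ k)
          have hj2' : 2*(j:ℝ) ≤ (k:ℝ) := by exact_mod_cast hj2
          rw [hcst]; linarith
        have hmono : ((k - j : ℕ):ℝ)^(-γ) ≤ 2^γ * x := by
          rw [← h2e]
          exact Real.rpow_le_rpow_of_nonpos (by linarith) hc2 (by linarith)
        have hA : Aseq α (k - j) ≤ C * (2^γ * x) :=
          le_trans hIH (mul_le_mul_of_nonneg_left hmono hCnn)
        exact mul_le_mul_of_nonneg_left hA (hnonneg j (by omega))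
      calc ∑ j ∈ R2, f j ≤ ∑ j ∈ R2, α j * (C * (2^γ*x)) := Finset.sum_le_sum hper
        _ = (∑ j ∈ R2, α j) * (C * (2^γ*x)) := by rw [← Finset.sum_mul]
        _ ≤ ε * (C * (2^γ*x)) := by
            apply mul_le_mul_of_nonneg_right
            · apply htail
              intro j hj
              simp only [hR2def, Finset.mem_filter, hRdef, Finset.mem_Ioo] at hj
              omega
            · exact mul_nonneg hCnn (mul_nonneg h2γ.le hx0.le)
    have hB3 : ∑ j ∈ R3, f j ≤ c * (2^γ * x) * T := by
      have hper : ∀ j ∈ R3, f j ≤ (c * (2^γ * x)) * Aseq α (k - j) := by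
        intro j hj
        simp only [hR3def, Finset.mem_filter, hRdef, Finset.mem_Ioo] at hj
        obtain ⟨⟨⟨hj0, hjk⟩, hjm⟩, hj2⟩ := hj
        have hα : α j ≤ c * (2^γ * x) := by
          refine le_trans (hbound j hj0) (mul_le_mul_of_nonneg_left ?_ hc.le)
          rw [← h2e]
          apply Real.rpow_le_rpow_of_nonpos (by linarith)
          · have : (k:ℝ) < 2*(j:ℝ) := by exact_mod_cast (by omega : k < 2*j)
            linarith
          · linarith
        exact mul_le_mul_of_nonneg_right hα (hA0 (k - j) (by omega))
      have hsumA : ∑ j ∈ R3, Aseq α (k - j) ≤ T := by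
        have hsub : ∑ j ∈ R3, Aseq α (k - j) ≤ ∑ j ∈ R, Aseq α (k - j) := by
          apply Finset.sum_le_sum_of_subset_of_nonneg
          · exact (Finset.filter_subset _ _).trans (Finset.filter_subset _ _)
          · intro j hj _
            simp only [hRdef, Finset.mem_Ioo] at hj
            exact hA0 (k - j) (by omega)
        have hre : ∑ j ∈ R, Aseq α (k - j) = ∑ i ∈ R, Aseq α i := by
          refine Finset.sum_nbij' (i := fun j => k - j) (j := fun i => k - i) ?_ ?_ ?_ ?_ ?_
          · intro a ha; simp only [hRdef, Finset.mem_Ioo] at ha ⊢; omega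
          · intro a ha; simp only [hRdef, Finset.mem_Ioo] at ha ⊢; omega
          · intro a ha; simp only [hRdef, Finset.mem_Ioo] at ha; omega
          · intro a ha; simp only [hRdef, Finset.mem_Ioo] at ha; omega
          · intro a ha; rfl
        have hIcc : R = Finset.Icc 1 (k-1) := by
          ext a
          simp only [hRdef, Finset.mem_Ioo, Finset.mem_Icc]
          omega
        calc ∑ j ∈ R3, Aseq α (k - j) ≤ ∑ j ∈ R, Aseq α (k - j) := hsub
          _ = ∑ i ∈ R, Aseq α i := hre
          _ = ∑ i ∈ Finset.Icc 1 (k-1), Aseq α i := by rw [hIcc]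
          _ ≤ T := hQ (k-1)
      calc ∑ j ∈ R3, f j ≤ ∑ j ∈ R3, (c * (2^γ*x)) * Aseq α (k - j) := Finset.sum_le_sum hper
        _ = (c * (2^γ*x)) * ∑ j ∈ R3, Aseq α (k - j) := by rw [← Finset.mul_sum]
        _ ≤ c * (2^γ * x) * T := mul_le_mul_of_nonneg_left hsumA
            (mul_nonneg hc.le (mul_nonneg h2γ.le hx0.le))
    have hαk : α k ≤ c * x := by rw [hxdef]; exact hbound k hk
    calc α k + ∑ j ∈ R, f j
        ≤ c*x + (S*(C*((1+δ)*x)) + (ε*(C*(2^γ*x)) + c*(2^γ*x)*T)) := by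
          rw [hsplit]
          exact add_le_add hαk (add_le_add hB1 (add_le_add hB2 hB3))
      _ = (c + S*C*(1+δ) + ε*(2:ℝ)^γ*C + c*(2:ℝ)^γ*T) * x := by ring
      _ = (c + S*C*(1+δ) + (1-S)/4*C + c*(2:ℝ)^γ*T) * x := by rw [hε2]
      _ ≤ C * x := mul_le_mul_of_nonneg_right hkeyC hx0.le

end
end

section
/- Assume 0 ≤ β < 1 and α_j ~ c j^{−γ} as j → ∞ for some γ > 0 and c > 0. Then Σ_{j=0}^{t−1} β^j α_{t−j} ~ (c/(1−β)) t^{−γ} as t → ∞. -/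
noncomputable section

open Filter Finset Asymptotics Topology

private lemma aux_ratio_tendsto : Tendsto (fun k : ℕ => ((k : ℝ) + 1) / (k : ℝ)) atTop (𝓝 1) := by
  have h : ∀ᶠ k : ℕ in atTop, (1 : ℝ) + (k : ℝ)⁻¹ = ((k : ℝ) + 1) / (k : ℝ) := by
    filter_upwards [eventually_ge_atTop 1] with k hk
    have hk0 : (k : ℝ) ≠ 0 := Nat.cast_ne_zero.mpr (by omega)
    field_simp
  have h2 := (tendsto_const_nhds (x := (1:ℝ)) (f := atTop)).add
    tendsto_inv_atTop_nhds_zero_nat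
  simpa using h2.congr' h

private lemma aux_rpow_tendsto (γ : ℝ) :
    Tendsto (fun k : ℕ => (((k : ℝ) + 1) / (k : ℝ)) ^ γ) atTop (𝓝 1) := by
  have hc : ContinuousAt (fun x : ℝ => x ^ γ) 1 :=
    Real.continuousAt_rpow_const 1 γ (Or.inl one_ne_zero)
  have := hc.tendsto.comp aux_ratio_tendsto
  simpa [Function.comp_def] using this

/-- Lemma 2: if `0 ≤ β < 1` and `α_j ~ c j^{-γ}` as `j → ∞` for some `γ > 0`, `c > 0`, then
`∑_{j=0}^{t-1} β^j α_{t-j} ~ (c/(1-β)) t^{-γ}` as `t → ∞` (here `a_t ~ b_t` means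
`a_t / b_t → 1`). -/
theorem statement_8 (α : ℕ → ℝ) (β c γ : ℝ)
    (hβ0 : 0 ≤ β) (hβ1 : β < 1) (hγ : 0 < γ) (hc : 0 < c)
    (hα : Filter.Tendsto (fun j : ℕ => α j / (c * (j : ℝ) ^ (-γ))) Filter.atTop (nhds 1)) :
    Filter.Tendsto
      (fun t : ℕ => (∑ j ∈ Finset.range t, β ^ j * α (t - j)) /
        ((c / (1 - β)) * (t : ℝ) ^ (-γ)))
      Filter.atTop (nhds 1) := by
  rcases eq_or_lt_of_le hβ0 with hβz | hβpos
  · -- case β = 0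
    have hβ : β = 0 := hβz.symm
    subst hβ
    refine hα.congr' ?_
    filter_upwards [eventually_ge_atTop 1] with t ht
    have hs : (∑ j ∈ Finset.range t, (0:ℝ) ^ j * α (t - j)) = α t := by
      rw [Finset.sum_eq_single 0]
      · simp
      · intro j _ hj0
        simp [zero_pow hj0]
      · intro h
        exact absurd (Finset.mem_range.mpr (by omega)) h
    rw [hs]
    norm_num
  · -- case 0 < β < 1
    have hβne : β ≠ 0 := ne_of_gt hβpos
    set b : ℝ := β⁻¹ with hbdef
    have hb1 : 1 < b := (one_lt_inv₀ hβpos).mpr hβ1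
    have hbpos : 0 < b := lt_trans one_pos hb1
    have h1β : 0 < 1 - β := by linarith
    set L : ℝ := c / (1 - β) with hLdef
    have hL : 0 < L := div_pos hc h1β
    set v : ℕ → ℝ := fun n => b ^ n * (n : ℝ) ^ (-γ) with hvdef
    set w : ℕ → ℝ := fun k => v (k + 1) - v k with hwdef
    set g : ℕ → ℝ := fun k => max (w k) 0 with hgdef
    set U : ℕ → ℝ := fun n => ∑ k ∈ Finset.range n, b ^ (k + 1) * α (k + 1) with hUdef
    set G : ℕ → ℝ := fun n => ∑ k ∈ Finset.range n, g k with hGdef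
    have hq := aux_rpow_tendsto γ
    -- w is eventually positive
    have hwpos : ∀ᶠ k : ℕ in atTop, 0 < w k := by
      filter_upwards [hq.eventually_lt_const hb1, eventually_ge_atTop 1] with k hk hk1
      have hk0 : (0:ℝ) < (k : ℝ) := by exact_mod_cast hk1
      have hk10 : (0:ℝ) < (k : ℝ) + 1 := by linarith
      have hkp : (0:ℝ) < (k : ℝ) ^ γ := Real.rpow_pos_of_pos hk0 γ
      have hk1p : (0:ℝ) < ((k : ℝ) + 1) ^ γ := Real.rpow_pos_of_pos hk10 γ
      rw [Real.div_rpow hk10.le hk0.le] at hk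
      have h2 : ((k:ℝ) + 1) ^ γ < b * (k:ℝ) ^ γ := (div_lt_iff₀ hkp).mp hk
      have h3 : (((k:ℝ)) ^ γ)⁻¹ < b * ((((k:ℝ) + 1)) ^ γ)⁻¹ := by
        rw [← one_div, ← div_eq_mul_inv, div_lt_div_iff₀ hkp hk1p, one_mul]
        exact h2
      have h4 : b ^ k * ((k:ℝ)) ^ (-γ) < b ^ (k + 1) * (((k:ℝ) + 1)) ^ (-γ) := by
        rw [pow_succ, Real.rpow_neg hk0.le, Real.rpow_neg hk10.le, mul_assoc]
        exact mul_lt_mul_of_pos_left h3 (pow_pos hbpos k)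
      have hw : w k = b ^ (k + 1) * (((k:ℝ) + 1)) ^ (-γ) - b ^ k * ((k:ℝ)) ^ (-γ) := by
        simp only [hwdef, hvdef]
        push_cast
        ring_nf
      rw [hw]
      linarith
    -- the telescoping identity
    have hv0 : v 0 = 0 := by
      simp only [hvdef]
      rw [Nat.cast_zero, Real.zero_rpow (neg_ne_zero.mpr (ne_of_gt hγ))]
      ring
    have hvtel : ∀ n, (∑ k ∈ Finset.range n, w k) = v n := by
      intro n
      rw [hwdef]
      rw [Finset.sum_range_sub v n, hv0, sub_zero]
    -- choose N with w positive from N on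
    obtain ⟨N, hN⟩ := eventually_atTop.mp hwpos
    set D : ℝ := (∑ k ∈ Finset.range N, g k) - v N with hDdef
    have hGv : ∀ n, N ≤ n → G n = v n + D := by
      intro n hn
      have hsplit : (∑ k ∈ Finset.range N, g k) + (∑ k ∈ Finset.Ico N n, g k) = G n :=
        Finset.sum_range_add_sum_Ico g hn
      have hIco : (∑ k ∈ Finset.Ico N n, g k) = ∑ k ∈ Finset.Ico N n, w k := by
        apply Finset.sum_congr rfl
        intro k hk
        have : N ≤ k := (Finset.mem_Ico.mp hk).1
        simp only [hgdef]
        exact max_eq_left (hN k this).le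
      have hIco2 : (∑ k ∈ Finset.Ico N n, w k) = v n - v N := by
        rw [Finset.sum_Ico_eq_sub _ hn, hvtel, hvtel]
      rw [← hsplit, hIco, hIco2, hDdef]
      ring
    -- v tends to infinity
    have hv_top : Tendsto v atTop atTop := by
      set m : ℕ := ⌈γ⌉₊ with hmdef
      have hmono : ∀ᶠ n : ℕ in atTop, b ^ n / (n : ℝ) ^ m ≤ v n := by
        filter_upwards [eventually_ge_atTop 1] with n hn
        have hn0 : (0:ℝ) < (n : ℝ) := by exact_mod_cast hn
        have h1n : (1:ℝ) ≤ (n : ℝ) := by exact_mod_cast hn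
        have hinv : ((n:ℝ) ^ m)⁻¹ = (n:ℝ) ^ (-(m:ℝ)) := by
          rw [← Real.rpow_natCast (n:ℝ) m, ← Real.rpow_neg hn0.le]
        rw [div_eq_mul_inv, hinv]
        apply mul_le_mul_of_nonneg_left _ (pow_pos hbpos n).le
        apply Real.rpow_le_rpow_of_exponent_le h1n
        have := Nat.le_ceil γ
        simp only [neg_le_neg_iff]
        exact_mod_cast this
      have ho : (fun n : ℕ => (n : ℝ) ^ m) =o[atTop] (fun n : ℕ => b ^ n) :=
        isLittleO_pow_const_const_pow_of_one_lt m hb1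
      have h0 : Tendsto (fun n : ℕ => (n : ℝ) ^ m / b ^ n) atTop (𝓝 0) :=
        ho.tendsto_div_nhds_zero
      have hpos : ∀ᶠ n : ℕ in atTop, (n : ℝ) ^ m / b ^ n ∈ Set.Ioi (0:ℝ) := by
        filter_upwards [eventually_ge_atTop 1] with n hn
        have hn0 : (0:ℝ) < (n : ℝ) := by exact_mod_cast hn
        exact Set.mem_Ioi.mpr (by positivity)
      have h0' : Tendsto (fun n : ℕ => (n : ℝ) ^ m / b ^ n) atTop (𝓝[>] 0) :=
        tendsto_nhdsWithin_iff.mpr ⟨h0, hpos⟩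
      have hlo : Tendsto (fun n : ℕ => b ^ n / (n : ℝ) ^ m) atTop atTop := by
        have := h0'.inv_tendsto_nhdsGT_zero
        refine this.congr fun n => ?_
        simp [inv_div]
      exact tendsto_atTop_mono' _ hmono hlo
    -- G tends to infinity
    have hG_top : Tendsto G atTop atTop := by
      have h1 : Tendsto (fun n => v n + D) atTop atTop :=
        tendsto_atTop_add_const_right _ D hv_top
      refine Tendsto.congr' ?_ h1
      filter_upwards [eventually_ge_atTop N] with n hn
      exact (hGv n hn).symm
    -- main ratio limit
    have hρ : Tendsto (fun k : ℕ => α (k + 1) / (c * ((k + 1 : ℕ) : ℝ) ^ (-γ))) atTop (𝓝 1) :=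
      hα.comp (tendsto_add_atTop_nat 1)
    have hden : Tendsto (fun k : ℕ => c / (1 - β * (((k:ℝ) + 1) / (k:ℝ)) ^ γ)) atTop
        (𝓝 (c / (1 - β))) := by
      have h1 : Tendsto (fun k : ℕ => 1 - β * (((k:ℝ) + 1) / (k:ℝ)) ^ γ) atTop (𝓝 (1 - β)) := by
        have := (tendsto_const_nhds (x := (1:ℝ)) (f := atTop)).sub
          ((tendsto_const_nhds (x := β) (f := atTop)).mul hq)
        simpa using this
      exact tendsto_const_nhds.div h1 (ne_of_gt h1β)
    have hmain : Tendsto (fun k : ℕ => b ^ (k + 1) * α (k + 1) / w k) atTop (𝓝 L) := by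
      have hmul := hρ.mul hden
      rw [one_mul, ← hLdef] at hmul
      refine hmul.congr' ?_
      filter_upwards [hq.eventually_lt_const hb1, eventually_ge_atTop 1] with k hk hk1
      have hk0 : (0:ℝ) < (k : ℝ) := by exact_mod_cast hk1
      have hk10 : (0:ℝ) < (k : ℝ) + 1 := by linarith
      have hkp : (0:ℝ) < (k : ℝ) ^ γ := Real.rpow_pos_of_pos hk0 γ
      have hk1p : (0:ℝ) < ((k : ℝ) + 1) ^ γ := Real.rpow_pos_of_pos hk10 γ
      have hQ : (((k:ℝ) + 1) / (k:ℝ)) ^ γ = ((k:ℝ) + 1) ^ γ / (k:ℝ) ^ γ :=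
        Real.div_rpow hk10.le hk0.le γ
      have hw : w k = b ^ (k + 1) * (((k:ℝ) + 1)) ^ (-γ) - b ^ k * ((k:ℝ)) ^ (-γ) := by
        simp only [hwdef, hvdef]
        push_cast
        ring_nf
      have hβQ : 0 < 1 - β * (((k:ℝ) + 1) / (k:ℝ)) ^ γ := by
        have h3 : β * (((k:ℝ) + 1) / (k:ℝ)) ^ γ < β * b :=
          mul_lt_mul_of_pos_left hk hβpos
        rw [hbdef, mul_inv_cancel₀ hβne] at h3
        linarith
      have hbβ : b * β = 1 := by rw [hbdef, inv_mul_cancel₀ hβne]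
      have hQk : (((k:ℝ) + 1) / (k:ℝ)) ^ γ * ((k:ℝ) + 1) ^ (-γ) = (k:ℝ) ^ (-γ) := by
        rw [hQ, Real.rpow_neg hk0.le, Real.rpow_neg hk10.le]
        field_simp
      have hwfac : w k = b ^ (k + 1) * ((k:ℝ) + 1) ^ (-γ) *
          (1 - β * (((k:ℝ) + 1) / (k:ℝ)) ^ γ) := by
        rw [hw]
        have hbb : b ^ (k + 1) * β = b ^ k := by
          rw [pow_succ, mul_assoc, hbβ, mul_one]
        calc b ^ (k + 1) * ((k:ℝ) + 1) ^ (-γ) - b ^ k * (k:ℝ) ^ (-γ)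
            = b ^ (k + 1) * ((k:ℝ) + 1) ^ (-γ) -
              (b ^ (k + 1) * β) * ((((k:ℝ) + 1) / (k:ℝ)) ^ γ * ((k:ℝ) + 1) ^ (-γ)) := by
              rw [hbb, hQk]
          _ = b ^ (k + 1) * ((k:ℝ) + 1) ^ (-γ) *
              (1 - β * (((k:ℝ) + 1) / (k:ℝ)) ^ γ) := by ring
      have hcast : (((k + 1 : ℕ)):ℝ) = (k:ℝ) + 1 := by push_cast; ring
      rw [hcast, hwfac]
      have hrne : ((k:ℝ) + 1) ^ (-γ) ≠ 0 := (Real.rpow_pos_of_pos hk10 _).ne'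
      have hbne : (b:ℝ) ^ (k + 1) ≠ 0 := (pow_pos hbpos _).ne'
      field_simp
    have hgw : ∀ᶠ k : ℕ in atTop, g k = w k := by
      filter_upwards [hwpos] with k hk
      exact max_eq_left hk.le
    have hmaing : Tendsto (fun k : ℕ => b ^ (k + 1) * α (k + 1) / g k) atTop (𝓝 L) := by
      refine hmain.congr' ?_
      filter_upwards [hgw] with k hk
      rw [hk]
    -- the little-o statement
    set f : ℕ → ℝ := fun k => b ^ (k + 1) * α (k + 1) - L * g k with hfdef
    have hfo : f =o[atTop] g := by
      rw [isLittleO_iff_tendsto' ?hgf]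
      case hgf =>
        filter_upwards [hwpos, hgw] with k hk hgk h0
        exact absurd (hgk ▸ h0) (ne_of_gt hk)
      have h1 : Tendsto (fun k : ℕ => b ^ (k + 1) * α (k + 1) / g k - L) atTop (𝓝 (L - L)) :=
        hmaing.sub tendsto_const_nhds
      rw [sub_self] at h1
      refine h1.congr' ?_
      filter_upwards [hwpos, hgw] with k hk hgk
      have hgne : g k ≠ 0 := by rw [hgk]; exact ne_of_gt hk
      simp only [hfdef]
      field_simp
    have hg0 : (0 : ℕ → ℝ) ≤ g := fun k => le_max_right _ _
    have hsum := hfo.sum_range hg0 hG_top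
    have hsum_eq : (fun n => ∑ k ∈ Finset.range n, f k) = fun n => U n - L * G n := by
      funext n
      simp only [hfdef, hUdef, hGdef, Finset.sum_sub_distrib, Finset.mul_sum]
    rw [hsum_eq] at hsum
    have hdiv0 : Tendsto (fun n => (U n - L * G n) / G n) atTop (𝓝 0) :=
      hsum.tendsto_div_nhds_zero
    have hGne : ∀ᶠ n : ℕ in atTop, 0 < G n := hG_top.eventually_gt_atTop 0
    have hUG : Tendsto (fun n => U n / G n) atTop (𝓝 L) := by
      have h1 : Tendsto (fun n => (U n - L * G n) / G n + L) atTop (𝓝 (0 + L)) :=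
        hdiv0.add tendsto_const_nhds
      rw [zero_add] at h1
      refine h1.congr' ?_
      filter_upwards [hGne] with n hn
      field_simp
      ring
    have hvne : ∀ᶠ n : ℕ in atTop, 0 < v n := hv_top.eventually_gt_atTop 0
    have hGv1 : Tendsto (fun n => G n / v n) atTop (𝓝 1) := by
      have h1 : Tendsto (fun n => 1 + D / v n) atTop (𝓝 (1 + 0)) :=
        tendsto_const_nhds.add (Tendsto.div_atTop tendsto_const_nhds hv_top)
      rw [add_zero] at h1
      refine h1.congr' ?_
      filter_upwards [eventually_ge_atTop N, hvne] with n hn hvn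
      rw [hGv n hn]
      field_simp
    have hUv : Tendsto (fun n => U n / v n) atTop (𝓝 L) := by
      have h1 := hUG.mul hGv1
      rw [mul_one] at h1
      refine h1.congr' ?_
      filter_upwards [hGne] with n hn
      field_simp
    -- final conversion
    have hfin : Tendsto (fun t => U t / v t / L) atTop (𝓝 1) := by
      have := hUv.div_const L
      rwa [div_self (ne_of_gt hL)] at this
    refine hfin.congr' ?_
    filter_upwards [eventually_ge_atTop 1] with t ht
    have ht0 : (0:ℝ) < (t : ℝ) := by exact_mod_cast ht
    have hS : (∑ j ∈ Finset.range t, β ^ j * α (t - j)) = β ^ t * U t := by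
      rw [hUdef, Finset.mul_sum]
      rw [← Finset.sum_range_reflect (fun j => β ^ j * α (t - j)) t]
      apply Finset.sum_congr rfl
      intro k hk
      have hkt : k < t := Finset.mem_range.mp hk
      have h1 : t - (t - 1 - k) = k + 1 := by omega
      have h2 : β ^ t * b ^ (k + 1) = β ^ (t - 1 - k) := by
        rw [hbdef, inv_pow, ← pow_sub₀ β hβne (by omega : k + 1 ≤ t)]
        congr 1
        omega
      rw [h1, ← mul_assoc, h2]
    rw [hS]
    have hrpne : ((t:ℝ)) ^ (-γ) ≠ 0 := (Real.rpow_pos_of_pos ht0 (-γ)).ne'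
    have hβtne : β ^ t ≠ 0 := pow_ne_zero t hβne
    simp only [hvdef, hLdef, hbdef, inv_pow]
    field_simp
end
end

section
/- Let {r_t} be a stationary asymmetric GARCH(1,1) process, i.e., a stationary L² solution of r_t = ζ_t σ_t, σ_t² = c² + (a + b r_{t−1})² + γ σ_{t−1}², with b² + γ < 1, E|r_0|³ < ∞, E|ζ_0|³ < ∞, and μ₃ := E ζ_0³ = 0. Then m₂ := E r_t² = (c² + a²)/(1 − b² − γ), E[r_0² r_0] satisfies m₃(0) := E[r_0³] = 0, and for every t ≥ 1, m₃(t) := E[r_t² r_0] = 2ab m₂ (γ + b²)^{t−1}. -/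
open MeasureTheory ProbabilityTheory Filter

set_option linter.unusedSectionVars false
set_option maxHeartbeats 1000000

noncomputable section

variable {Ω : Type} [MeasurableSpace Ω]

/-- Convergence in `L^p` (convergence in `p`-th mean) of a sequence of partial sums
to a limit function. -/
def TendstoInLp (μ : Measure Ω) (p : ℝ) (f : ℕ → Ω → ℝ) (g : Ω → ℝ) : Prop :=
  Filter.Tendsto (fun N => ∫ ω, |f N ω - g ω| ^ p ∂μ) Filter.atTop (nhds 0)

/-- (Strict) stationarity of a `ℤ`-indexed real-valued process: the law of the whole path is
invariant under the time shift. -/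
def Stationary (μ : Measure Ω) (r : ℤ → Ω → ℝ) : Prop :=
  Measure.map (fun ω (t : ℤ) => r t ω) μ = Measure.map (fun ω (t : ℤ) => r (t + 1) ω) μ

/-- The natural filtration `F_t = σ(ζ_s, s ≤ t)` generated by the innovations. -/
def natFilt (ζ : ℤ → Ω → ℝ) (t : ℤ) : MeasurableSpace Ω :=
  ⨆ s : {s : ℤ // s ≤ t}, MeasurableSpace.comap (ζ (s : ℤ)) inferInstance

/-- A process `r` is adapted (to the natural filtration of `ζ`). -/
def AdaptedTo (ζ r : ℤ → Ω → ℝ) : Prop :=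
  ∀ t : ℤ, @Measurable Ω ℝ (natFilt ζ t) _ (r t)

/-- A process `X` is predictable: `X_t` is `F_{t-1}`-measurable. -/
def PredictableTo (ζ X : ℤ → Ω → ℝ) : Prop :=
  ∀ t : ℤ, @Measurable Ω ℝ (natFilt ζ (t - 1)) _ (X t)

/-- The innovations `ζ` form an i.i.d. sequence. -/
def IsIIDseq (μ : Measure Ω) (ζ : ℤ → Ω → ℝ) : Prop :=
  iIndepFun ζ μ ∧
  ∀ t : ℤ, Measure.map (ζ t) μ = Measure.map (ζ 0) μ

/-- Joint (strict) stationarity of the pair process `(r_t, σ_t)`. -/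
def Stationary2 (μ : Measure Ω) (r σ : ℤ → Ω → ℝ) : Prop :=
  Measure.map (fun ω (t : ℤ) => (r t ω, σ t ω)) μ =
    Measure.map (fun ω (t : ℤ) => (r (t + 1) ω, σ (t + 1) ω)) μ

/-- `(r, σ)` solves the asymmetric GARCH(1,1) equations
`r_t = ζ_t σ_t`, `σ_t² = c² + (a + b r_{t-1})² + γ σ_{t-1}²`, with `r` adapted and `σ ≥ 0`
predictable (with respect to the natural filtration of `ζ`). -/
def IsAGARCHsol (μ : Measure Ω) (a b c γ : ℝ) (ζ r σ : ℤ → Ω → ℝ) : Prop :=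
  AdaptedTo ζ r ∧ PredictableTo ζ σ ∧ (∀ t ω, 0 ≤ σ t ω) ∧
  ∀ t : ℤ, ∀ᵐ ω ∂μ,
    r t ω = ζ t ω * σ t ω ∧
    σ t ω ^ 2 = c ^ 2 + (a + b * r (t - 1) ω) ^ 2 + γ * σ (t - 1) ω ^ 2

namespace AGARCHaux

variable {μ : Measure Ω} {ζ : ℤ → Ω → ℝ}

lemma natFilt_le (hζ : ∀ t, Measurable (ζ t)) (t : ℤ) :
    natFilt ζ t ≤ ‹MeasurableSpace Ω› :=
  iSup_le fun s => measurable_iff_comap_le.1 (hζ s)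

lemma natFilt_mono {s t : ℤ} (h : s ≤ t) : natFilt ζ s ≤ natFilt ζ t :=
  iSup_le fun u => le_iSup_of_le ⟨(u : ℤ), u.2.trans h⟩ le_rfl

lemma natFilt_eq (ζ : ℤ → Ω → ℝ) (t : ℤ) :
    natFilt ζ t = ⨆ i ∈ {u : ℤ | u ≤ t}, MeasurableSpace.comap (ζ i) inferInstance := by
  rw [natFilt, ← iSup_subtype'']
  rfl

lemma indep_natFilt [IsProbabilityMeasure μ] (hζ : ∀ t, Measurable (ζ t))
    (hind : iIndepFun ζ μ) {s t : ℤ} (hst : s < t) :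
    Indep (natFilt ζ s) (MeasurableSpace.comap (ζ t) inferInstance) μ := by
  have h := indep_iSup_of_disjoint
    (m := fun i => MeasurableSpace.comap (ζ i) inferInstance)
    (fun i => measurable_iff_comap_le.1 (hζ i)) hind.iIndep
    (S := {u : ℤ | u ≤ s}) (T := {t})
    (Set.disjoint_singleton_right.2 (by simpa using hst.not_ge))
  rwa [← natFilt_eq, iSup_singleton] at h

lemma indepFun_natFilt [IsProbabilityMeasure μ] (hζ : ∀ t, Measurable (ζ t))
    (hind : iIndepFun ζ μ) {s t : ℤ} (hst : s < t)
    {X : Ω → ℝ} (hX : Measurable[natFilt ζ s] X) :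
    IndepFun X (ζ t) μ :=
  indep_of_indep_of_le_left (indep_natFilt hζ hind hst) (measurable_iff_comap_le.1 hX)

lemma integral_mul_phi [IsProbabilityMeasure μ] (hζ : ∀ t, Measurable (ζ t))
    (hind : iIndepFun ζ μ) {s t : ℤ} (hst : s < t)
    {X : Ω → ℝ} (hX : Measurable[natFilt ζ s] X) {φ : ℝ → ℝ} (hφ : Measurable φ) :
    ∫ ω, X ω * φ (ζ t ω) ∂μ = (∫ ω, X ω ∂μ) * ∫ ω, φ (ζ t ω) ∂μ := by
  have h1 : IndepFun X (fun ω => φ (ζ t ω)) μ :=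
    (indepFun_natFilt hζ hind hst hX).comp measurable_id hφ
  exact h1.integral_fun_mul_eq_mul_integral ((hX.mono (natFilt_le hζ s) le_rfl).aestronglyMeasurable)
    ((hφ.comp (hζ t)).aestronglyMeasurable)

lemma int_mul_of_sq {u v : Ω → ℝ} (hu : Measurable u) (hv : Measurable v)
    (hu2 : Integrable (fun ω => u ω ^ 2) μ) (hv2 : Integrable (fun ω => v ω ^ 2) μ) :
    Integrable (fun ω => u ω * v ω) μ := by
  refine Integrable.mono' (hu2.add hv2) ((hu.mul hv).aestronglyMeasurable)
    (Filter.Eventually.of_forall fun ω => ?_)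
  simp only [Pi.add_apply]
  rw [Real.norm_eq_abs, abs_mul]
  nlinarith [sq_nonneg (|u ω| - |v ω|), abs_nonneg (u ω), abs_nonneg (v ω),
    sq_abs (u ω), sq_abs (v ω)]

lemma int_sq_mul {u v : Ω → ℝ} (hu : Measurable u) (hv : Measurable v)
    (hu3 : Integrable (fun ω => |u ω| ^ 3) μ) (hv3 : Integrable (fun ω => |v ω| ^ 3) μ) :
    Integrable (fun ω => u ω ^ 2 * v ω) μ := by
  refine Integrable.mono' (hu3.add hv3) (((hu.pow_const 2).mul hv).aestronglyMeasurable)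
    (Filter.Eventually.of_forall fun ω => ?_)
  simp only [Pi.add_apply]
  rw [Real.norm_eq_abs, abs_mul, abs_pow]
  nlinarith [mul_nonneg (sq_nonneg (|u ω| - |v ω|)) (add_nonneg (abs_nonneg (u ω)) (abs_nonneg (v ω))),
    mul_nonneg (abs_nonneg (u ω)) (abs_nonneg (v ω)), abs_nonneg (u ω), abs_nonneg (v ω)]

end AGARCHaux

open AGARCHaux

/-- Moment equations for the stationary asymmetric GARCH(1,1) process: with `b² + γ < 1`,
`E|r₀|³ < ∞`, `E|ζ₀|³ < ∞` and `μ₃ = E ζ₀³ = 0`, one has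
`m₂ = E r_t² = (c² + a²)/(1 - b² - γ)`, `m₃(0) = E r₀³ = 0` and
`m₃(t) = E[r_t² r₀] = 2ab m₂ (γ + b²)^{t-1}` for all `t ≥ 1`. -/
theorem statement_13
    (μ : Measure Ω) [IsProbabilityMeasure μ]
    (a b c γ : ℝ) (ζ r σ : ℤ → Ω → ℝ)
    (hγ0 : 0 ≤ γ) (hγ1 : γ < 1) (hbγ : b ^ 2 + γ < 1)
    (hζmeas : ∀ t, Measurable (ζ t))
    (hiid : IsIIDseq μ ζ)
    (hmean : ∫ ω, ζ 0 ω ∂μ = 0)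
    (hvar : ∫ ω, ζ 0 ω ^ 2 ∂μ = 1)
    (hμ3 : ∫ ω, ζ 0 ω ^ 3 ∂μ = 0)
    (hζ3 : Integrable (fun ω => |ζ 0 ω| ^ 3) μ)
    (hsol : IsAGARCHsol μ a b c γ ζ r σ)
    (hstat : Stationary2 μ r σ)
    (hr2 : ∀ t : ℤ, MemLp (r t) 2 μ)
    (hσ2 : ∀ t : ℤ, MemLp (σ t) 2 μ)
    (hr3 : Integrable (fun ω => |r 0 ω| ^ 3) μ) :
    (∀ t : ℤ, ∫ ω, r t ω ^ 2 ∂μ = (c ^ 2 + a ^ 2) / (1 - b ^ 2 - γ)) ∧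
    (∫ ω, r 0 ω ^ 3 ∂μ = 0) ∧
    (∀ t : ℕ, 1 ≤ t →
      ∫ ω, r (t : ℤ) ω ^ 2 * r 0 ω ∂μ =
        2 * a * b * ((c ^ 2 + a ^ 2) / (1 - b ^ 2 - γ)) * (γ + b ^ 2) ^ (t - 1)) := by
  obtain ⟨hrad, hσpred, hσpos, heq⟩ := hsol
  -- measurability
  have hrm : ∀ t, Measurable (r t) := fun t => (hrad t).mono (natFilt_le hζmeas t) le_rfl
  have hσm : ∀ t, Measurable (σ t) := fun t => (hσpred t).mono (natFilt_le hζmeas (t - 1)) le_rfl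
  -- moments of ζ
  have hζmom : ∀ (φ : ℝ → ℝ), Continuous φ → ∀ t : ℤ,
      ∫ ω, φ (ζ t ω) ∂μ = ∫ ω, φ (ζ 0 ω) ∂μ := by
    intro φ hφ t
    rw [← integral_map (hζmeas t).aemeasurable hφ.aestronglyMeasurable, hiid.2 t,
      integral_map (hζmeas 0).aemeasurable hφ.aestronglyMeasurable]
  have hζint0 : ∀ t : ℤ, ∫ ω, ζ t ω ∂μ = 0 := by
    intro t
    have h := hζmom (fun x => x) continuous_id t
    simpa using h.trans hmean
  have hζint2 : ∀ t : ℤ, ∫ ω, ζ t ω ^ 2 ∂μ = 1 := by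
    intro t
    have h := hζmom (fun x => x ^ 2) (continuous_id.pow 2) t
    simpa using h.trans hvar
  -- product formulas
  have keyid : ∀ (s t : ℤ), s < t → ∀ X : Ω → ℝ, Measurable[natFilt ζ s] X →
      ∫ ω, X ω * ζ t ω ∂μ = (∫ ω, X ω ∂μ) * ∫ ω, ζ t ω ∂μ := by
    intro s t hst X hX
    simpa using integral_mul_phi hζmeas hiid.1 hst hX measurable_id
  have key2 : ∀ (s t : ℤ), s < t → ∀ X : Ω → ℝ, Measurable[natFilt ζ s] X →
      ∫ ω, X ω * ζ t ω ^ 2 ∂μ = (∫ ω, X ω ∂μ) * ∫ ω, ζ t ω ^ 2 ∂μ := by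
    intro s t hst X hX
    simpa using integral_mul_phi hζmeas hiid.1 hst hX (measurable_id.pow_const 2)
  have key3 : ∀ (s t : ℤ), s < t → ∀ X : Ω → ℝ, Measurable[natFilt ζ s] X →
      ∫ ω, X ω * ζ t ω ^ 3 ∂μ = (∫ ω, X ω ∂μ) * ∫ ω, ζ t ω ^ 3 ∂μ := by
    intro s t hst X hX
    simpa using integral_mul_phi hζmeas hiid.1 hst hX (measurable_id.pow_const 3)
  -- stationarity transfer
  have hpairm : ∀ t : ℤ, Measurable (fun ω => (r t ω, σ t ω)) :=
    fun t => (hrm t).prodMk (hσm t)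
  have hpath : Measurable (fun ω (s : ℤ) => (r s ω, σ s ω)) :=
    measurable_pi_lambda _ fun s => hpairm s
  have hpath' : Measurable (fun ω (s : ℤ) => (r (s + 1) ω, σ (s + 1) ω)) :=
    measurable_pi_lambda _ fun s => hpairm (s + 1)
  have hstep : ∀ t : ℤ, Measure.map (fun ω => (r t ω, σ t ω)) μ
      = Measure.map (fun ω => (r (t + 1) ω, σ (t + 1) ω)) μ := by
    intro t
    have e1 : Measure.map (fun ω => (r t ω, σ t ω)) μ
        = Measure.map (fun f : ℤ → ℝ × ℝ => f t)
          (Measure.map (fun ω (s : ℤ) => (r s ω, σ s ω)) μ) :=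
      (Measure.map_map (measurable_pi_apply t) hpath).symm
    have e2 : Measure.map (fun ω => (r (t + 1) ω, σ (t + 1) ω)) μ
        = Measure.map (fun f : ℤ → ℝ × ℝ => f t)
          (Measure.map (fun ω (s : ℤ) => (r (s + 1) ω, σ (s + 1) ω)) μ) :=
      (Measure.map_map (measurable_pi_apply t) hpath').symm
    rw [e1, e2, hstat]
  have hpairlaw : ∀ t : ℤ, Measure.map (fun ω => (r t ω, σ t ω)) μ
      = Measure.map (fun ω => (r 0 ω, σ 0 ω)) μ := by
    intro t
    induction t using Int.induction_on with
    | zero => rfl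
    | succ n ih => exact (hstep n).symm.trans ih
    | pred n ih =>
      have h := hstep (-(n : ℤ) - 1)
      rw [show (-(n : ℤ) - 1 + 1) = -(n : ℤ) by ring] at h
      exact h.trans ih
  have hstat2 : ∀ (g : ℝ × ℝ → ℝ), Continuous g → ∀ t : ℤ,
      (Integrable (fun ω => g (r t ω, σ t ω)) μ ↔ Integrable (fun ω => g (r 0 ω, σ 0 ω)) μ) ∧
      ∫ ω, g (r t ω, σ t ω) ∂μ = ∫ ω, g (r 0 ω, σ 0 ω) ∂μ := by
    intro g hg t
    constructor
    · have h1 : Integrable (fun ω => g (r t ω, σ t ω)) μ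
          ↔ Integrable g (Measure.map (fun ω => (r t ω, σ t ω)) μ) :=
        (integrable_map_measure hg.aestronglyMeasurable (hpairm t).aemeasurable).symm
      have h0 : Integrable (fun ω => g (r 0 ω, σ 0 ω)) μ
          ↔ Integrable g (Measure.map (fun ω => (r 0 ω, σ 0 ω)) μ) :=
        (integrable_map_measure hg.aestronglyMeasurable (hpairm 0).aemeasurable).symm
      rw [h1, hpairlaw t]
      exact h0.symm
    · rw [← integral_map (hpairm t).aemeasurable hg.aestronglyMeasurable, hpairlaw t,
        integral_map (hpairm 0).aemeasurable hg.aestronglyMeasurable]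
  -- basic integrabilities
  have Ir : ∀ t : ℤ, Integrable (r t) μ := fun t => (hr2 t).integrable one_le_two
  have Iσ : ∀ t : ℤ, Integrable (σ t) μ := fun t => (hσ2 t).integrable one_le_two
  have Ir2 : ∀ t : ℤ, Integrable (fun ω => r t ω ^ 2) μ := fun t => (hr2 t).integrable_sq
  have Iσ2 : ∀ t : ℤ, Integrable (fun ω => σ t ω ^ 2) μ := fun t => (hσ2 t).integrable_sq
  have Ir3 : ∀ t : ℤ, Integrable (fun ω => |r t ω| ^ 3) μ := by
    intro t
    exact ((hstat2 (fun p => |p.1| ^ 3) ((continuous_abs.comp continuous_fst).pow 3) t).1).2 hr3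
  have Iσ30 : Integrable (fun ω => |σ 0 ω| ^ 3) μ := by
    have hXm : Measurable[natFilt ζ (0 - 1)] (fun ω => σ 0 ω ^ 3) := (hσpred 0).pow_const 3
    have hXY : IndepFun (fun ω => σ 0 ω ^ 3) (fun ω => |ζ 0 ω| ^ 3) μ :=
      (indepFun_natFilt hζmeas hiid.1 (show (0 : ℤ) - 1 < 0 by norm_num)
        hXm).comp measurable_id ((continuous_abs.pow 3).measurable)
    have hprod : Integrable ((fun ω => |ζ 0 ω| ^ 3) * fun ω => σ 0 ω ^ 3) μ := by
      refine hr3.congr ?_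
      filter_upwards [heq 0] with ω hω
      simp only [Pi.mul_apply]
      rw [hω.1, abs_mul, mul_pow, abs_of_nonneg (hσpos 0 ω)]
    have hnz : ¬(fun ω => |ζ 0 ω| ^ 3) =ᵐ[μ] 0 := by
      intro h
      have h2 : (fun ω => ζ 0 ω ^ 2) =ᵐ[μ] 0 := by
        filter_upwards [h] with ω hω
        simp only [Pi.zero_apply] at hω ⊢
        have : |ζ 0 ω| = 0 := by
          have := pow_eq_zero_iff (n := 3) (by norm_num) |>.1 hω
          exact this
        have : ζ 0 ω = 0 := abs_eq_zero.1 this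
        simp [this]
      have h3 : ∫ ω, ζ 0 ω ^ 2 ∂μ = 0 := by
        rw [integral_congr_ae h2]
        simp
      exact one_ne_zero (hvar.symm.trans h3)
    have h30 : Integrable (fun ω => σ 0 ω ^ 3) μ :=
      hXY.symm.integrable_right_of_integrable_op (· * ·) 1 one_ne_zero
          (fun x y => by simp [enorm_mul]) hprod
        ((((continuous_abs.pow 3).measurable).comp (hζmeas 0)).aestronglyMeasurable)
        (((hσm 0).pow_const 3).aestronglyMeasurable) hnz
    refine h30.congr (Filter.Eventually.of_forall fun ω => ?_)
    show σ 0 ω ^ 3 = |σ 0 ω| ^ 3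
    rw [abs_of_nonneg (hσpos 0 ω)]
  have Iσ3abs : ∀ t : ℤ, Integrable (fun ω => |σ t ω| ^ 3) μ := by
    intro t
    exact ((hstat2 (fun p => |p.2| ^ 3) ((continuous_abs.comp continuous_snd).pow 3) t).1).2 Iσ30
  have Iσ3 : ∀ t : ℤ, Integrable (fun ω => σ t ω ^ 3) μ := by
    intro t
    refine (Iσ3abs t).congr (Filter.Eventually.of_forall fun ω => ?_)
    show |σ t ω| ^ 3 = σ t ω ^ 3
    rw [abs_of_nonneg (hσpos t ω)]
  -- E r_0 = 0
  have hEr0 : ∫ ω, r 0 ω ∂μ = 0 := by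
    have hae : (fun ω => r 0 ω) =ᵐ[μ] fun ω => σ 0 ω * ζ 0 ω := by
      filter_upwards [heq 0] with ω hω
      rw [hω.1]; ring
    rw [integral_congr_ae hae, keyid (0 - 1) 0 (by norm_num) _ (hσpred 0), hζint0 0, mul_zero]
  -- E r_t² = E σ_t²
  have hr2σ2 : ∀ t : ℤ, ∫ ω, r t ω ^ 2 ∂μ = ∫ ω, σ t ω ^ 2 ∂μ := by
    intro t
    have hae : (fun ω => r t ω ^ 2) =ᵐ[μ] fun ω => σ t ω ^ 2 * ζ t ω ^ 2 := by
      filter_upwards [heq t] with ω hω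
      rw [hω.1]; ring
    rw [integral_congr_ae hae, key2 (t - 1) t (sub_one_lt t) _ ((hσpred t).pow_const 2),
      hζint2 t, mul_one]
  have hσ2c : ∀ t : ℤ, ∫ ω, σ t ω ^ 2 ∂μ = ∫ ω, σ 0 ω ^ 2 ∂μ :=
    fun t => (hstat2 (fun p => p.2 ^ 2) (continuous_snd.pow 2) t).2
  have hr2c : ∀ t : ℤ, ∫ ω, r t ω ^ 2 ∂μ = ∫ ω, r 0 ω ^ 2 ∂μ :=
    fun t => (hstat2 (fun p => p.1 ^ 2) (continuous_fst.pow 2) t).2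
  -- the m₂ equation
  have hm2eq : ∫ ω, r 0 ω ^ 2 ∂μ
      = c ^ 2 + a ^ 2 + (b ^ 2 + γ) * ∫ ω, r 0 ω ^ 2 ∂μ := by
    have hae : (fun ω => σ 1 ω ^ 2) =ᵐ[μ] fun ω =>
        (c ^ 2 + a ^ 2) + ((2 * a * b) * r (1 - 1) ω
          + (b ^ 2 * r (1 - 1) ω ^ 2 + γ * σ (1 - 1) ω ^ 2)) := by
      filter_upwards [heq 1] with ω hω
      rw [hω.2]; ring
    have h10 : (1 : ℤ) - 1 = 0 := by norm_num
    rw [h10] at hae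
    have I1 : Integrable (fun ω => (2 * a * b) * r 0 ω) μ := (Ir 0).const_mul _
    have I2 : Integrable (fun ω => b ^ 2 * r 0 ω ^ 2) μ := (Ir2 0).const_mul _
    have I3 : Integrable (fun ω => γ * σ 0 ω ^ 2) μ := (Iσ2 0).const_mul _
    have hσ1 : ∫ ω, σ 1 ω ^ 2 ∂μ = ∫ ω, r 0 ω ^ 2 ∂μ := by
      rw [hσ2c 1, ← hr2σ2 0]
    have I23 : Integrable (fun ω => b ^ 2 * r 0 ω ^ 2 + γ * σ 0 ω ^ 2) μ := I2.add I3
    have I123 : Integrable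
        (fun ω => 2 * a * b * r 0 ω + (b ^ 2 * r 0 ω ^ 2 + γ * σ 0 ω ^ 2)) μ := I1.add I23
    have hint : ∫ ω, σ 1 ω ^ 2 ∂μ
        = c ^ 2 + a ^ 2 + (b ^ 2 + γ) * ∫ ω, r 0 ω ^ 2 ∂μ := by
      rw [integral_congr_ae hae, integral_add (integrable_const _) I123,
        integral_add I1 I23, integral_add I2 I3, integral_const_mul, integral_const_mul,
        integral_const_mul, hEr0, hr2σ2 0, integral_const]
      simp only [probReal_univ, measure_univ, ENNReal.toReal_one, smul_eq_mul, one_mul, mul_zero, add_zero]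
      rw [← hr2σ2 0]
      ring
    linarith [hσ1, hint]
  have hden : (0 : ℝ) < 1 - b ^ 2 - γ := by nlinarith
  have hm2 : ∫ ω, r 0 ω ^ 2 ∂μ = (c ^ 2 + a ^ 2) / (1 - b ^ 2 - γ) := by
    rw [eq_div_iff hden.ne']
    nlinarith [hm2eq]
  -- third moment at 0
  have hr03 : ∫ ω, r 0 ω ^ 3 ∂μ = 0 := by
    have hae : (fun ω => r 0 ω ^ 3) =ᵐ[μ] fun ω => σ 0 ω ^ 3 * ζ 0 ω ^ 3 := by
      filter_upwards [heq 0] with ω hω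
      rw [hω.1]; ring
    rw [integral_congr_ae hae, key3 (0 - 1) 0 (by norm_num) _ ((hσpred 0).pow_const 3),
      hμ3, mul_zero]
  refine ⟨fun t => by rw [hr2c t, hm2], hr03, ?_⟩
  -- third order cross moments
  have hr0meas : ∀ t : ℤ, 1 ≤ t → Measurable[natFilt ζ (t - 1)] (r 0) :=
    fun t ht => (hrad 0).mono (natFilt_mono (by omega)) le_rfl
  have hAB : ∀ t : ℤ, 1 ≤ t →
      ∫ ω, r t ω ^ 2 * r 0 ω ∂μ = ∫ ω, σ t ω ^ 2 * r 0 ω ∂μ := by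
    intro t ht
    have hX : Measurable[natFilt ζ (t - 1)] (fun ω => σ t ω ^ 2 * r 0 ω) :=
      ((hσpred t).pow_const 2).mul (hr0meas t ht)
    have hae : (fun ω => r t ω ^ 2 * r 0 ω) =ᵐ[μ]
        fun ω => σ t ω ^ 2 * r 0 ω * ζ t ω ^ 2 := by
      filter_upwards [heq t] with ω hω
      rw [hω.1]; ring
    rw [integral_congr_ae hae, key2 (t - 1) t (sub_one_lt t) _ hX, hζint2 t, mul_one]
  have hC : ∀ t : ℤ, 1 ≤ t → ∫ ω, r t ω * r 0 ω ∂μ = 0 := by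
    intro t ht
    have hX : Measurable[natFilt ζ (t - 1)] (fun ω => σ t ω * r 0 ω) :=
      (hσpred t).mul (hr0meas t ht)
    have hae : (fun ω => r t ω * r 0 ω) =ᵐ[μ] fun ω => σ t ω * r 0 ω * ζ t ω := by
      filter_upwards [heq t] with ω hω
      rw [hω.1]; ring
    rw [integral_congr_ae hae, keyid (t - 1) t (sub_one_lt t) _ hX, hζint0 t, mul_zero]
  have hB0 : ∫ ω, σ 0 ω ^ 2 * r 0 ω ∂μ = 0 := by
    have hae : (fun ω => σ 0 ω ^ 2 * r 0 ω) =ᵐ[μ] fun ω => σ 0 ω ^ 3 * ζ 0 ω := by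
      filter_upwards [heq 0] with ω hω
      rw [hω.1]; ring
    rw [integral_congr_ae hae, keyid (0 - 1) 0 (by norm_num) _ ((hσpred 0).pow_const 3),
      hζint0 0, mul_zero]
  have hA0 : ∫ ω, r 0 ω ^ 2 * r 0 ω ∂μ = 0 := by
    have : (fun ω => r 0 ω ^ 2 * r 0 ω) = fun ω => r 0 ω ^ 3 := by
      funext ω; ring
    rw [this, hr03]
  have hC0 : ∫ ω, r 0 ω * r 0 ω ∂μ = (c ^ 2 + a ^ 2) / (1 - b ^ 2 - γ) := by
    have : (fun ω => r 0 ω * r 0 ω) = fun ω => r 0 ω ^ 2 := by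
      funext ω; ring
    rw [this, hm2]
  -- integrabilities for the recursion
  have Irr : ∀ s : ℤ, Integrable (fun ω => r s ω * r 0 ω) μ :=
    fun s => int_mul_of_sq (hrm s) (hrm 0) (Ir2 s) (Ir2 0)
  have Ir2r : ∀ s : ℤ, Integrable (fun ω => r s ω ^ 2 * r 0 ω) μ :=
    fun s => int_sq_mul (hrm s) (hrm 0) (Ir3 s) (Ir3 0)
  have Iσ2r : ∀ s : ℤ, Integrable (fun ω => σ s ω ^ 2 * r 0 ω) μ :=
    fun s => int_sq_mul (hσm s) (hrm 0) (Iσ3abs s) (Ir3 0)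
  have hBrec : ∀ t : ℤ, 1 ≤ t →
      ∫ ω, σ t ω ^ 2 * r 0 ω ∂μ
        = 2 * a * b * (∫ ω, r (t - 1) ω * r 0 ω ∂μ)
          + b ^ 2 * (∫ ω, r (t - 1) ω ^ 2 * r 0 ω ∂μ)
          + γ * (∫ ω, σ (t - 1) ω ^ 2 * r 0 ω ∂μ) := by
    intro t ht
    have hae : (fun ω => σ t ω ^ 2 * r 0 ω) =ᵐ[μ] fun ω =>
        (c ^ 2 + a ^ 2) * r 0 ω + ((2 * a * b) * (r (t - 1) ω * r 0 ω)
          + (b ^ 2 * (r (t - 1) ω ^ 2 * r 0 ω) + γ * (σ (t - 1) ω ^ 2 * r 0 ω))) := by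
      filter_upwards [heq t] with ω hω
      rw [hω.2]; ring
    have I0 : Integrable (fun ω => (c ^ 2 + a ^ 2) * r 0 ω) μ := (Ir 0).const_mul _
    have I1 : Integrable (fun ω => (2 * a * b) * (r (t - 1) ω * r 0 ω)) μ :=
      (Irr (t - 1)).const_mul _
    have I2 : Integrable (fun ω => b ^ 2 * (r (t - 1) ω ^ 2 * r 0 ω)) μ :=
      (Ir2r (t - 1)).const_mul _
    have I3 : Integrable (fun ω => γ * (σ (t - 1) ω ^ 2 * r 0 ω)) μ :=
      (Iσ2r (t - 1)).const_mul _
    have I23 : Integrable (fun ω => b ^ 2 * (r (t - 1) ω ^ 2 * r 0 ω)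
        + γ * (σ (t - 1) ω ^ 2 * r 0 ω)) μ := I2.add I3
    have I123 : Integrable (fun ω => 2 * a * b * (r (t - 1) ω * r 0 ω)
        + (b ^ 2 * (r (t - 1) ω ^ 2 * r 0 ω) + γ * (σ (t - 1) ω ^ 2 * r 0 ω))) μ := I1.add I23
    rw [integral_congr_ae hae, integral_add I0 I123,
      integral_add I1 I23, integral_add I2 I3, integral_const_mul,
      integral_const_mul, integral_const_mul, integral_const_mul, hEr0]
    ring
  -- the induction
  set m2 : ℝ := (c ^ 2 + a ^ 2) / (1 - b ^ 2 - γ) with hm2def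
  have main : ∀ n : ℕ, ∫ ω, r ((n : ℤ) + 1) ω ^ 2 * r 0 ω ∂μ
      = 2 * a * b * m2 * (γ + b ^ 2) ^ n := by
    intro n
    induction n with
    | zero =>
      have h1 : ((0 : ℕ) : ℤ) + 1 = 1 := by norm_num
      rw [h1, hAB 1 le_rfl, hBrec 1 le_rfl]
      have h10 : (1 : ℤ) - 1 = 0 := by norm_num
      rw [h10, hC0, hA0, hB0]
      simp only [pow_zero, mul_zero, add_zero, mul_one, hm2def]
    | succ n ih =>
      have h1 : ((n + 1 : ℕ) : ℤ) + 1 = ((n : ℤ) + 1) + 1 := by push_cast; ring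
      have ht : (1 : ℤ) ≤ (n : ℤ) + 1 + 1 := by omega
      rw [h1, hAB _ ht, hBrec _ ht]
      have h2 : ((n : ℤ) + 1 + 1) - 1 = (n : ℤ) + 1 := by ring
      rw [h2, hC ((n : ℤ) + 1) (by omega), ← hAB ((n : ℤ) + 1) (by omega), ih]
      ring
  intro t ht
  obtain ⟨n, rfl⟩ := Nat.exists_eq_add_of_le ht
  have hcast : ((1 + n : ℕ) : ℤ) = (n : ℤ) + 1 := by push_cast; ring
  have hsub : (1 + n) - 1 = n := by omega
  rw [hcast, hsub, main n]


end
end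

section
/- Let {r_t} be a stationary asymmetric GARCH(1,1) process with b² + γ < 1, μ₃ := E ζ_0³ = 0, μ₄ := E ζ_0⁴ < ∞, and E r_t⁴ < ∞ (for which μ₄ b⁴ + 2b²γ + γ² < 1 suffices). Then E r_t⁴ = μ₄ m₂ [ (c² + a²)(1 + b² + γ) + 4a²b² ] / (1 − b⁴ μ₄ − 2b²γ − γ²), where m₂ := E r_t² = (c² + a²)/(1 − b² − γ). -/
open MeasureTheory ProbabilityTheory Filter

noncomputable section

variable {Ω : Type} [MeasurableSpace Ω]

section Auxil

variable {μ : Measure Ω}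

lemma aux_integrable_sum (G : ℕ → ℕ → Ω → ℝ)
    (hG : ∀ i j, i ≤ 4 → j ≤ 4 → Integrable (G i j) μ) :
    ∀ (l : List (ℝ × ℕ × ℕ)), (∀ p ∈ l, p.2.1 ≤ 4 ∧ p.2.2 ≤ 4) →
      Integrable (fun ω => (l.map (fun p => p.1 * G p.2.1 p.2.2 ω)).sum) μ := by
  intro l
  induction l with
  | nil => intro _; simpa using integrable_const (0 : ℝ)
  | cons p l ih =>
    intro h
    simp only [List.map_cons, List.sum_cons]
    exact ((hG _ _ (h p (List.mem_cons_self)).1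
      (h p (List.mem_cons_self)).2).const_mul p.1).add
      (ih fun q hq => h q (List.mem_cons_of_mem _ hq))

lemma aux_integral_sum (G : ℕ → ℕ → Ω → ℝ)
    (hG : ∀ i j, i ≤ 4 → j ≤ 4 → Integrable (G i j) μ) :
    ∀ (l : List (ℝ × ℕ × ℕ)), (∀ p ∈ l, p.2.1 ≤ 4 ∧ p.2.2 ≤ 4) →
      ∫ ω, (l.map (fun p => p.1 * G p.2.1 p.2.2 ω)).sum ∂μ
        = (l.map (fun p => p.1 * ∫ ω, G p.2.1 p.2.2 ω ∂μ)).sum := by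
  intro l
  induction l with
  | nil => intro _; simp
  | cons p l ih =>
    intro h
    simp only [List.map_cons, List.sum_cons]
    rw [integral_add ((hG _ _ (h p (List.mem_cons_self)).1
        (h p (List.mem_cons_self)).2).const_mul p.1)
        (aux_integrable_sum G hG l (fun q hq => h q (List.mem_cons_of_mem _ hq))),
      integral_const_mul, ih (fun q hq => h q (List.mem_cons_of_mem _ hq))]

lemma aux_pair_map_const (μ : Measure Ω) (r σ : ℤ → Ω → ℝ)
    (hr : ∀ t, Measurable (r t)) (hσ : ∀ t, Measurable (σ t))
    (hstat : Stationary2 μ r σ) (t : ℤ) :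
    Measure.map (fun ω => (r t ω, σ t ω)) μ = Measure.map (fun ω => (r 0 ω, σ 0 ω)) μ := by
  have hΦ : Measurable (fun ω (s : ℤ) => (r s ω, σ s ω)) :=
    measurable_pi_lambda _ fun s => (hr s).prodMk (hσ s)
  have hΦ' : Measurable (fun ω (s : ℤ) => (r (s + 1) ω, σ (s + 1) ω)) :=
    measurable_pi_lambda _ fun s => (hr _).prodMk (hσ _)
  have hstep : ∀ s : ℤ, Measure.map (fun ω => (r s ω, σ s ω)) μ
      = Measure.map (fun ω => (r (s + 1) ω, σ (s + 1) ω)) μ := by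
    intro s
    have h1 := congrArg (Measure.map (fun f : ℤ → ℝ × ℝ => f s)) hstat
    rw [Measure.map_map (measurable_pi_apply s) hΦ,
      Measure.map_map (measurable_pi_apply s) hΦ'] at h1
    exact h1
  induction t using Int.induction_on with
  | zero => rfl
  | succ k ih => rw [← hstep k]; exact ih
  | pred k ih =>
    have h := hstep (-(k : ℤ) - 1)
    rw [sub_add_cancel] at h
    rw [h]; exact ih

end Auxil

set_option maxHeartbeats 1000000 in
/-- Fourth-moment formula for the stationary asymmetric GARCH(1,1) process: with
`b² + γ < 1`, `μ₃ = E ζ₀³ = 0`, `μ₄ = E ζ₀⁴ < ∞` and `E r_t⁴ < ∞`, one has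
`E r_t⁴ = μ₄ m₂ [(c² + a²)(1 + b² + γ) + 4a²b²]/(1 - b⁴ μ₄ - 2b²γ - γ²)`, where
`m₂ = E r_t² = (c² + a²)/(1 - b² - γ)`. -/
theorem statement_14
    (μ : Measure Ω) [IsProbabilityMeasure μ]
    (a b c γ : ℝ) (ζ r σ : ℤ → Ω → ℝ)
    (hγ0 : 0 ≤ γ) (hγ1 : γ < 1) (hbγ : b ^ 2 + γ < 1)
    (hζmeas : ∀ t, Measurable (ζ t))
    (hiid : IsIIDseq μ ζ)
    (hmean : ∫ ω, ζ 0 ω ∂μ = 0)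
    (hvar : ∫ ω, ζ 0 ω ^ 2 ∂μ = 1)
    (hμ3 : ∫ ω, ζ 0 ω ^ 3 ∂μ = 0)
    (hζ3 : Integrable (fun ω => |ζ 0 ω| ^ 3) μ)
    (hsol : IsAGARCHsol μ a b c γ ζ r σ)
    (hstat : Stationary2 μ r σ)
    (hr2 : ∀ t : ℤ, MemLp (r t) 2 μ)
    (hσ2 : ∀ t : ℤ, MemLp (σ t) 2 μ)
    (hr3 : Integrable (fun ω => |r 0 ω| ^ 3) μ)
    (hζ4 : Integrable (fun ω => ζ 0 ω ^ 4) μ)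
    (hr4 : ∀ t : ℤ, Integrable (fun ω => r t ω ^ 4) μ) :
    ∀ t : ℤ, ∫ ω, r t ω ^ 4 ∂μ =
      (∫ ω, ζ 0 ω ^ 4 ∂μ) * ((c ^ 2 + a ^ 2) / (1 - b ^ 2 - γ)) *
          ((c ^ 2 + a ^ 2) * (1 + b ^ 2 + γ) + 4 * a ^ 2 * b ^ 2) /
        (1 - b ^ 4 * (∫ ω, ζ 0 ω ^ 4 ∂μ) - 2 * b ^ 2 * γ - γ ^ 2) := by
  obtain ⟨hadapt, hpred, hσpos, heq⟩ := hsol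
  -- ambient measurability
  have hnatle : ∀ t : ℤ, natFilt ζ t ≤ ‹MeasurableSpace Ω› :=
    fun t => iSup_le fun s => measurable_iff_comap_le.mp (hζmeas s)
  have hrm : ∀ t, Measurable (r t) := fun t => (hadapt t).mono (hnatle t) le_rfl
  have hσm : ∀ t, Measurable (σ t) := fun t => (hpred t).mono (hnatle (t - 1)) le_rfl
  -- independence of ζ 0 and σ 0
  have hind0 : Indep (MeasurableSpace.comap (ζ 0) inferInstance) (natFilt ζ (0 - 1)) μ := by
    have h := indep_iSup_of_disjoint
      (m := fun i : ℤ => MeasurableSpace.comap (ζ i) inferInstance)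
      (fun i => measurable_iff_comap_le.mp (hζmeas i)) hiid.1
      (S := {0}) (T := {s : ℤ | s ≤ 0 - 1})
      (by
        rw [Set.disjoint_left]
        rintro x rfl hx
        simp only [Set.mem_setOf_eq] at hx
        norm_num at hx)
    have e1 : (⨆ i ∈ ({0} : Set ℤ), MeasurableSpace.comap (ζ i) inferInstance)
        = MeasurableSpace.comap (ζ 0) inferInstance := by simp
    have e2 : (⨆ i ∈ {s : ℤ | s ≤ 0 - 1}, MeasurableSpace.comap (ζ i) inferInstance)
        = natFilt ζ (0 - 1) := by
      rw [natFilt, iSup_subtype]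
      rfl
    rwa [e1, e2] at h
  have hIFbase : IndepFun (ζ 0) (σ 0) μ :=
    (IndepFun_iff_Indep _ _ _).mpr
      (indep_of_indep_of_le_right hind0 (measurable_iff_comap_le.mp (hpred 0)))
  have hIF : ∀ i j : ℕ, IndepFun (fun ω => ζ 0 ω ^ i) (fun ω => σ 0 ω ^ j) μ :=
    fun i j => hIFbase.comp (measurable_id.pow_const i) (measurable_id.pow_const j)
  -- values of mixed moments
  have hgval : ∀ i j : ℕ, ∫ ω, ζ 0 ω ^ i * σ 0 ω ^ j ∂μ
      = (∫ ω, ζ 0 ω ^ i ∂μ) * ∫ ω, σ 0 ω ^ j ∂μ :=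
    fun i j => (hIF i j).integral_fun_mul_eq_mul_integral
      ((hζmeas 0).pow_const i).aestronglyMeasurable ((hσm 0).pow_const j).aestronglyMeasurable
  -- non-degeneracy of ζ 0
  have hζne : ¬ (ζ 0 =ᵐ[μ] 0) := by
    intro h
    have h2 : (fun ω => ζ 0 ω ^ 2) =ᵐ[μ] (fun _ => (0 : ℝ)) := by
      filter_upwards [h] with ω hω
      simp only [Pi.zero_apply] at hω
      simp [hω]
    rw [integral_congr_ae h2, integral_zero] at hvar
    exact one_ne_zero hvar.symm
  -- integrability of powers of ζ 0
  have hζ2int : Integrable (fun ω => ζ 0 ω ^ 2) μ := by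
    by_contra hni
    rw [integral_undef hni] at hvar
    exact one_ne_zero hvar.symm
  have hζ1int : Integrable (ζ 0) μ := by
    refine Integrable.mono' (hζ2int.add (integrable_const 1)) (hζmeas 0).aestronglyMeasurable ?_
    filter_upwards with ω
    simp only [Pi.add_apply, Real.norm_eq_abs]
    nlinarith [sq_nonneg (|ζ 0 ω| - 1), sq_abs (ζ 0 ω), abs_nonneg (ζ 0 ω)]
  have hζ3int : Integrable (fun ω => ζ 0 ω ^ 3) μ := by
    refine Integrable.mono' hζ3 ((hζmeas 0).pow_const 3).aestronglyMeasurable ?_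
    filter_upwards with ω
    rw [Real.norm_eq_abs, abs_pow]
  have hζint : ∀ i : ℕ, i ≤ 4 → Integrable (fun ω => ζ 0 ω ^ i) μ := by
    intro i hi
    interval_cases i
    · simpa using integrable_const (1 : ℝ)
    · simpa using hζ1int
    · exact hζ2int
    · exact hζ3int
    · exact hζ4
  -- integrability of powers of σ 0
  have hr03int : Integrable (fun ω => r 0 ω ^ 3) μ := by
    refine Integrable.mono' hr3 ((hrm 0).pow_const 3).aestronglyMeasurable ?_
    filter_upwards with ω
    rw [Real.norm_eq_abs, abs_pow]
  have hσ4int : Integrable (fun ω => σ 0 ω ^ 4) μ := by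
    refine ((hIF 4 4).symm).integrable_left_of_integrable_op (· * ·) 1 one_ne_zero
        (fun x y => by simp [enorm_mul])
        (?_ : Integrable ((fun ω => σ 0 ω ^ 4) * (fun ω => ζ 0 ω ^ 4)) μ)
      ((hσm 0).pow_const 4).aestronglyMeasurable ((hζmeas 0).pow_const 4).aestronglyMeasurable ?_
    · refine (hr4 0).congr ?_
      filter_upwards [heq 0] with ω hω
      rw [Pi.mul_apply, hω.1]
      ring
    · intro h
      apply hζne
      filter_upwards [h] with ω hω
      simp only [Pi.zero_apply] at hω ⊢
      exact pow_eq_zero_iff (by norm_num) |>.mp hω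
  have hσ3int : Integrable (fun ω => σ 0 ω ^ 3) μ := by
    refine ((hIF 3 3).symm).integrable_left_of_integrable_op (· * ·) 1 one_ne_zero
        (fun x y => by simp [enorm_mul])
        (?_ : Integrable ((fun ω => σ 0 ω ^ 3) * (fun ω => ζ 0 ω ^ 3)) μ)
      ((hσm 0).pow_const 3).aestronglyMeasurable ((hζmeas 0).pow_const 3).aestronglyMeasurable ?_
    · refine hr03int.congr ?_
      filter_upwards [heq 0] with ω hω
      rw [Pi.mul_apply, hω.1]
      ring
    · intro h
      apply hζne
      filter_upwards [h] with ω hω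
      simp only [Pi.zero_apply] at hω ⊢
      exact pow_eq_zero_iff (by norm_num) |>.mp hω
  have hσint : ∀ j : ℕ, j ≤ 4 → Integrable (fun ω => σ 0 ω ^ j) μ := by
    intro j hj
    interval_cases j
    · simpa using integrable_const (1 : ℝ)
    · simpa using (hσ2 0).integrable one_le_two
    · exact (hσ2 0).integrable_sq
    · exact hσ3int
    · exact hσ4int
  have hgint : ∀ i j : ℕ, i ≤ 4 → j ≤ 4 →
      Integrable (fun ω => ζ 0 ω ^ i * σ 0 ω ^ j) μ :=
    fun i j hi hj => (hIF i j).integrable_mul (hζint i hi) (hσint j hj)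
  -- stationarity transfer of moments
  have hmom : ∀ (t : ℤ) (f : ℝ × ℝ → ℝ), Measurable f →
      ∫ ω, f (r t ω, σ t ω) ∂μ = ∫ ω, f (r 0 ω, σ 0 ω) ∂μ := by
    intro t f hf
    have hp : Measurable (fun ω => (r t ω, σ t ω)) := (hrm t).prodMk (hσm t)
    have hp0 : Measurable (fun ω => (r 0 ω, σ 0 ω)) := (hrm 0).prodMk (hσm 0)
    rw [← integral_map hp.aemeasurable hf.aestronglyMeasurable,
      aux_pair_map_const μ r σ hrm hσm hstat t,
      integral_map hp0.aemeasurable hf.aestronglyMeasurable]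
  -- master computation lemma
  have key : ∀ (l : List (ℝ × ℕ × ℕ)), (∀ p ∈ l, p.2.1 ≤ 4 ∧ p.2.2 ≤ 4) → ∀ F : Ω → ℝ,
      (∀ᵐ ω ∂μ, F ω = (l.map (fun p => p.1 * (ζ 0 ω ^ p.2.1 * σ 0 ω ^ p.2.2))).sum) →
      ∫ ω, F ω ∂μ
        = (l.map (fun p => p.1 * ((∫ ω, ζ 0 ω ^ p.2.1 ∂μ) * ∫ ω, σ 0 ω ^ p.2.2 ∂μ))).sum := by
    intro l hl F hF
    rw [integral_congr_ae hF,
      aux_integral_sum (fun i j ω => ζ 0 ω ^ i * σ 0 ω ^ j) hgint l hl]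
    exact congrArg List.sum (List.map_congr_left fun p hp => by rw [hgval])
  -- particular moments of ζ 0
  have hz0 : ∫ ω, ζ 0 ω ^ (0 : ℕ) ∂μ = 1 := by simp
  have hz1 : ∫ ω, ζ 0 ω ^ (1 : ℕ) ∂μ = 0 := by simpa using hmean
  have hs0 : ∫ ω, σ 0 ω ^ (0 : ℕ) ∂μ = 1 := by simp
  -- the recursion equations at time 1, reduced to time 0
  have h1 := heq 1
  simp only [show (1 : ℤ) - 1 = 0 by norm_num] at h1
  have h0 := heq 0
  -- second-moment equation
  have hA1 : ∫ ω, σ 1 ω ^ 2 ∂μ = ∫ ω, σ 0 ω ^ 2 ∂μ := by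
    simpa using hmom 1 (fun p => p.2 ^ 2) (measurable_snd.pow_const 2)
  have e2 := key [(c ^ 2 + a ^ 2, 0, 0), (2 * a * b, 1, 1), (b ^ 2, 2, 2), (γ, 0, 2)]
    (by intro p hp; fin_cases hp <;> exact ⟨by norm_num, by norm_num⟩)
    (fun ω => σ 1 ω ^ 2)
    (by
      filter_upwards [h1, h0] with ω h1ω h0ω
      simp only [List.map_cons, List.sum_cons, List.map_nil, List.sum_nil]
      rw [h1ω.2, h0ω.1]
      ring)
  simp only [List.map_cons, List.sum_cons, List.map_nil, List.sum_nil] at e2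
  rw [hA1, hz0, hz1, hvar, hs0] at e2
  have h2f : (∫ ω, σ 0 ω ^ 2 ∂μ) * (1 - b ^ 2 - γ) = c ^ 2 + a ^ 2 := by
    linear_combination e2
  -- fourth-moment equation
  have hM1 : ∫ ω, σ 1 ω ^ 4 ∂μ = ∫ ω, σ 0 ω ^ 4 ∂μ := by
    simpa using hmom 1 (fun p => p.2 ^ 4) (measurable_snd.pow_const 4)
  have e4 := key [((c ^ 2 + a ^ 2) ^ 2, 0, 0), (4 * a * b * (c ^ 2 + a ^ 2), 1, 1),
      (4 * a ^ 2 * b ^ 2 + 2 * b ^ 2 * (c ^ 2 + a ^ 2), 2, 2), (4 * a * b ^ 3, 3, 3),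
      (b ^ 4, 4, 4), (2 * γ * (c ^ 2 + a ^ 2), 0, 2), (4 * a * b * γ, 1, 3),
      (2 * b ^ 2 * γ, 2, 4), (γ ^ 2, 0, 4)]
    (by intro p hp; fin_cases hp <;> exact ⟨by norm_num, by norm_num⟩)
    (fun ω => σ 1 ω ^ 4)
    (by
      filter_upwards [h1, h0] with ω h1ω h0ω
      simp only [List.map_cons, List.sum_cons, List.map_nil, List.sum_nil]
      have h4 : σ 1 ω ^ 4 = (σ 1 ω ^ 2) ^ 2 := by ring
      rw [h4, h1ω.2, h0ω.1]
      ring)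
  simp only [List.map_cons, List.sum_cons, List.map_nil, List.sum_nil] at e4
  rw [hM1, hz0, hz1, hvar, hμ3, hs0] at e4
  have h4f : (∫ ω, σ 0 ω ^ 4 ∂μ)
        * (1 - b ^ 4 * (∫ ω, ζ 0 ω ^ 4 ∂μ) - 2 * b ^ 2 * γ - γ ^ 2)
      = (c ^ 2 + a ^ 2) ^ 2 + (∫ ω, σ 0 ω ^ 2 ∂μ)
        * (4 * a ^ 2 * b ^ 2 + 2 * b ^ 2 * (c ^ 2 + a ^ 2) + 2 * γ * (c ^ 2 + a ^ 2)) := by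
    linear_combination e4
  -- the fourth moment of r
  intro t
  have hrt : ∫ ω, r t ω ^ 4 ∂μ = ∫ ω, r 0 ω ^ 4 ∂μ := by
    simpa using hmom t (fun p => p.1 ^ 4) (measurable_fst.pow_const 4)
  have hr04 : ∫ ω, r 0 ω ^ 4 ∂μ
      = (∫ ω, ζ 0 ω ^ 4 ∂μ) * ∫ ω, σ 0 ω ^ 4 ∂μ := by
    rw [← hgval 4 4]
    refine integral_congr_ae ?_
    filter_upwards [h0] with ω hω
    rw [hω.1]
    ring
  rw [hrt, hr04]
  have hbγ' : (1 : ℝ) - b ^ 2 - γ ≠ 0 := by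
    have : 0 < 1 - b ^ 2 - γ := by linarith
    exact ne_of_gt this
  by_cases hD : 1 - b ^ 4 * (∫ ω, ζ 0 ω ^ 4 ∂μ) - 2 * b ^ 2 * γ - γ ^ 2 = 0
  · rw [hD, div_zero]
    -- degenerate case: the process vanishes
    have hAnn : 0 ≤ ∫ ω, σ 0 ω ^ 2 ∂μ := integral_nonneg fun ω => sq_nonneg _
    rw [hD, mul_zero] at h4f
    have hca : c ^ 2 + a ^ 2 = 0 := by
      nlinarith [sq_nonneg (c ^ 2 + a ^ 2), mul_nonneg hAnn (by positivity : (0:ℝ) ≤ 4 * a ^ 2 * b ^ 2),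
        mul_nonneg hAnn (by positivity : (0:ℝ) ≤ 2 * b ^ 2 * (c ^ 2 + a ^ 2)),
        mul_nonneg hAnn (mul_nonneg (mul_nonneg (by norm_num : (0:ℝ) ≤ 2) hγ0) (by positivity : (0:ℝ) ≤ c ^ 2 + a ^ 2))]
    have hA0 : ∫ ω, σ 0 ω ^ 2 ∂μ = 0 := by
      rw [hca] at h2f
      exact (mul_eq_zero.mp h2f).resolve_right hbγ'
    have hs2z : (fun ω => σ 0 ω ^ 2) =ᵐ[μ] 0 :=
      (integral_eq_zero_iff_of_nonneg (fun ω => sq_nonneg _) (hσ2 0).integrable_sq).mp hA0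
    have hM0 : ∫ ω, σ 0 ω ^ 4 ∂μ = 0 := by
      have h40 : (fun ω => σ 0 ω ^ 4) =ᵐ[μ] 0 := by
        filter_upwards [hs2z] with ω hω
        simp only [Pi.zero_apply] at hω ⊢
        have : σ 0 ω = 0 := pow_eq_zero_iff (by norm_num) |>.mp hω
        simp [this]
      rw [integral_congr_ae h40]
      simp
    rw [hM0, mul_zero]
  · have hA : ∫ ω, σ 0 ω ^ 2 ∂μ = (c ^ 2 + a ^ 2) / (1 - b ^ 2 - γ) := by
      rw [eq_div_iff hbγ']
      linear_combination h2f
    rw [← hA, eq_div_iff hD]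
    linear_combination (∫ ω, ζ 0 ω ^ 4 ∂μ) * h4f
      - (∫ ω, ζ 0 ω ^ 4 ∂μ) * (c ^ 2 + a ^ 2) * h2f

end
end
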